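/- arXiv:1308.2211 — 6 statements merged into one kernel-verified Lean document; each statement's English description precedes it below -/
import Mathlib

section
/- Let G be a finite simple graph, and let V₀ ⊆ V(G) be a reducible vertex set, reducible using the set 𝒮 of edge-disjoint triangles and the edge set X. Let G' = (G − X) − V₀, the graph obtained from G by deleting the edges of X and then the vertices of V₀. If τ(G') ≤ 2ν(G'), then τ(G) ≤ 2ν(G). -/
open SimpleGraph

variable {V : Type*}

/-- `S` is a set of pairwise edge-disjoint triangles of `G` (two triangles, viewed as
3-element vertex sets, are edge-disjoint iff they share at most one vertex). -/
def EdgeDisjointTriangles [DecidableEq V] (G : SimpleGraph V) (S : Finset (Finset V)) : Prop :=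
  (∀ t ∈ S, G.IsNClique 3 t) ∧
    ∀ t₁ ∈ S, ∀ t₂ ∈ S, t₁ ≠ t₂ → (t₁ ∩ t₂).card ≤ 1

/-- ν(G): the maximum size of a set of pairwise edge-disjoint triangles of `G`. -/
noncomputable def triNu [DecidableEq V] (G : SimpleGraph V) : ℕ :=
  sSup {n | ∃ S : Finset (Finset V), EdgeDisjointTriangles G S ∧ S.card = n}

/-- τ(G): the minimum size of an edge set `Y` such that `G - Y` is triangle-free. -/
noncomputable def triTau [DecidableEq V] (G : SimpleGraph V) : ℕ :=
  sInf {n | ∃ Y : Finset (Sym2 V), ↑Y ⊆ G.edgeSet ∧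
    (G.deleteEdges ↑Y).CliqueFree 3 ∧ Y.card = n}

section Aux
variable {W : Type*}

lemma edt_bddAbove [Fintype W] [DecidableEq W] (G : SimpleGraph W) :
    BddAbove {n | ∃ S : Finset (Finset W), EdgeDisjointTriangles G S ∧ S.card = n} :=
  ⟨Fintype.card (Finset W), fun _ ⟨S, _, hc⟩ => hc ▸ Finset.card_le_univ S⟩

lemma le_triNu [Fintype W] [DecidableEq W] {G : SimpleGraph W} {S : Finset (Finset W)}
    (h : EdgeDisjointTriangles G S) : S.card ≤ triNu G :=
  le_csSup (edt_bddAbove G) ⟨S, h, rfl⟩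

lemma triNu_spec [Fintype W] [DecidableEq W] (G : SimpleGraph W) :
    ∃ S, EdgeDisjointTriangles G S ∧ S.card = triNu G :=
  Nat.sSup_mem (s := {n | ∃ S : Finset (Finset W), EdgeDisjointTriangles G S ∧ S.card = n})
    ⟨0, ∅, ⟨fun t ht => absurd ht (Finset.notMem_empty t),
      fun t ht => absurd ht (Finset.notMem_empty t)⟩, rfl⟩ (edt_bddAbove G)

lemma triTau_le [DecidableEq W] {G : SimpleGraph W} {Y : Finset (Sym2 W)}
    (h1 : ↑Y ⊆ G.edgeSet) (h2 : (G.deleteEdges ↑Y).CliqueFree 3) : triTau G ≤ Y.card :=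
  Nat.sInf_le ⟨Y, h1, h2, rfl⟩

lemma triTau_spec [Fintype W] [DecidableEq W] (G : SimpleGraph W) :
    ∃ Y : Finset (Sym2 W), ↑Y ⊆ G.edgeSet ∧ (G.deleteEdges ↑Y).CliqueFree 3 ∧
      Y.card = triTau G := by
  classical
  refine Nat.sInf_mem (s := {n | ∃ Y : Finset (Sym2 W), ↑Y ⊆ G.edgeSet ∧
      (G.deleteEdges ↑Y).CliqueFree 3 ∧ Y.card = n})
    ⟨_, (Set.toFinite G.edgeSet).toFinset, by rw [Set.Finite.coe_toFinset], ?_, rfl⟩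
  have : G.deleteEdges ↑(Set.toFinite G.edgeSet).toFinset = ⊥ := by
    ext a b
    simp only [deleteEdges_adj, Set.Finite.coe_toFinset, bot_adj, iff_false, not_and, not_not]
    exact fun h => h
  rw [this]
  exact cliqueFree_bot (by norm_num)

end Aux

/-- If `V₀` is reducible using `S` and `X`, and the graph `G' = (G - X) - V₀` satisfies
τ(G') ≤ 2ν(G'), then τ(G) ≤ 2ν(G). -/
theorem reducible_vertex_set_wins [Fintype V] [DecidableEq V] (G : SimpleGraph V)
    (V₀ : Finset V) (S : Finset (Finset V)) (X : Finset (Sym2 V))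
    (hV₀ : V₀.Nonempty)
    (hS : EdgeDisjointTriangles G S)
    (hXE : ↑X ⊆ G.edgeSet)
    (hcard : X.card ≤ 2 * S.card)
    (hii : ∀ t : Finset V, (G.deleteEdges ↑X).IsNClique 3 t → ∀ x ∈ V₀, x ∉ t)
    (hiii : ∀ t ∈ S, ∀ u ∈ t, ∀ v ∈ t, u ≠ v → u ∉ V₀ → v ∉ V₀ → s(u, v) ∈ X)
    (h' : triTau ((G.deleteEdges ↑X).induce {x : V | x ∉ V₀}) ≤
          2 * triNu ((G.deleteEdges ↑X).induce {x : V | x ∉ V₀})) :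
    triTau G ≤ 2 * triNu G := by
  classical
  obtain ⟨Y', hY'E, hY'free, hY'card⟩ :=
    triTau_spec ((G.deleteEdges ↑X).induce {x : V | x ∉ V₀})
  obtain ⟨S', hS'edt, hS'card⟩ :=
    triNu_spec ((G.deleteEdges ↑X).induce {x : V | x ∉ V₀})
  let emb : ↥{x : V | x ∉ V₀} ↪ V := Function.Embedding.subtype _
  let embY : Sym2 ↥{x : V | x ∉ V₀} ↪ Sym2 V :=
    ⟨Sym2.map (Subtype.val), Sym2.map.injective Subtype.val_injective⟩
  -- adjacency in the reduced graph
  have hadj : ∀ (a b : ↥{x : V | x ∉ V₀}),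
      ((G.deleteEdges ↑X).induce {x : V | x ∉ V₀}).Adj a b ↔
        (G.Adj ↑a ↑b ∧ s((a : V), (b : V)) ∉ X) := by
    intro a b
    simp [comap_adj, deleteEdges_adj]
  -- Part 1: the covering set Y = X ∪ Y'
  set Y : Finset (Sym2 V) := X ∪ Y'.map embY with hYdef
  have hYE : ↑Y ⊆ G.edgeSet := by
    intro e he
    rw [hYdef, Finset.coe_union, Set.mem_union] at he
    rcases he with he | he
    · exact hXE he
    · rw [Finset.mem_coe, Finset.mem_map] at he
      obtain ⟨e', he', rfl⟩ := he
      have hmem : e' ∈ ((G.deleteEdges ↑X).induce {x : V | x ∉ V₀}).edgeSet := hY'E he'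
      revert hmem
      induction e' using Sym2.ind with
      | _ a b =>
        intro hmem
        rw [SimpleGraph.mem_edgeSet, hadj] at hmem
        simp only [embY, Function.Embedding.coeFn_mk, Sym2.map_pair_eq, SimpleGraph.mem_edgeSet]
        exact hmem.1
  have hfree : (G.deleteEdges ↑Y).CliqueFree 3 := by
    intro t ht
    have htX : (G.deleteEdges ↑X).IsNClique 3 t := by
      refine ⟨fun a ha b hb hab => ?_, ht.2⟩
      have h2 := ht.1 ha hb hab
      rw [deleteEdges_adj] at h2 ⊢
      refine ⟨h2.1, fun hx => h2.2 ?_⟩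
      rw [Finset.mem_coe] at hx ⊢
      rw [hYdef, Finset.mem_union]
      exact Or.inl hx
    have hsub : ∀ x ∈ t, x ∈ {x : V | x ∉ V₀} := fun x hx hxV₀ => hii t htX x hxV₀ hx
    set t' : Finset ↥{x : V | x ∉ V₀} := t.subtype (· ∈ {x : V | x ∉ V₀}) with ht'def
    have htmap : t'.map emb = t := by
      rw [ht'def, Finset.subtype_map, Finset.filter_true_of_mem hsub]
    refine hY'free t' ⟨fun a ha b hb hab => ?_, ?_⟩
    · have ha' : (a : V) ∈ t := by
        rw [← htmap]; exact Finset.mem_map_of_mem emb ha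
      have hb' : (b : V) ∈ t := by
        rw [← htmap]; exact Finset.mem_map_of_mem emb hb
      have hGadj := ht.1 ha' hb' (Subtype.val_injective.ne hab)
      rw [deleteEdges_adj] at hGadj
      rw [deleteEdges_adj, hadj]
      have hnotY : s((a : V), (b : V)) ∉ Y := fun h => hGadj.2 (Finset.mem_coe.mpr h)
      refine ⟨⟨hGadj.1, fun hX' => hnotY ?_⟩, fun hY'mem => hnotY ?_⟩
      · rw [hYdef, Finset.mem_union]; exact Or.inl hX'
      · rw [hYdef, Finset.mem_union]
        refine Or.inr ?_
        have : embY s(a, b) ∈ Y'.map embY := Finset.mem_map_of_mem embY (Finset.mem_coe.mp hY'mem)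
        simpa only [embY, Function.Embedding.coeFn_mk, Sym2.map_pair_eq] using this
    · rw [← ht.2, ← htmap, Finset.card_map]
  have htau1 : triTau G ≤ X.card + Y'.card := by
    refine le_trans (triTau_le hYE hfree) (le_trans (Finset.card_union_le _ _) ?_)
    rw [Finset.card_map]
  -- Part 2: the triangle family T = S ∪ S'
  let fEmb : Finset ↥{x : V | x ∉ V₀} ↪ Finset V := ⟨fun u => u.map emb, Finset.map_injective emb⟩
  have hkey : ∀ t₁ ∈ S, ∀ t₂ ∈ S'.map fEmb, (t₁ ∩ t₂).card ≤ 1 := by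
    intro t₁ h₁ t₂ h₂
    by_contra hgt
    push_neg at hgt
    obtain ⟨u, hu, v, hv, huv⟩ := Finset.one_lt_card.mp hgt
    obtain ⟨b₀, hb₀, rfl⟩ := Finset.mem_map.mp h₂
    simp only [fEmb, Function.Embedding.coeFn_mk] at hu hv
    obtain ⟨u', hu', rfl⟩ := Finset.mem_map.mp (Finset.mem_inter.mp hu).2
    obtain ⟨v', hv', rfl⟩ := Finset.mem_map.mp (Finset.mem_inter.mp hv).2
    have hu'v' : u' ≠ v' := fun h => huv (by rw [h])
    have hadj' := (hS'edt.1 b₀ hb₀).1 (Finset.mem_coe.mpr hu') (Finset.mem_coe.mpr hv') hu'v'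
    rw [hadj] at hadj'
    exact hadj'.2 (hiii t₁ h₁ _ (Finset.mem_inter.mp hu).1 _ (Finset.mem_inter.mp hv).1
      huv u'.2 v'.2)
  have hdisj : Disjoint S (S'.map fEmb) := by
    rw [Finset.disjoint_left]
    intro t htS htM
    have h1 := hkey t htS t htM
    have h3 := (hS.1 t htS).2
    rw [Finset.inter_self] at h1
    omega
  have hedt : EdgeDisjointTriangles G (S ∪ S'.map fEmb) := by
    constructor
    · intro t htT
      rw [Finset.mem_union] at htT
      rcases htT with htT | htT
      · exact hS.1 t htT
      · obtain ⟨b₀, hb₀, rfl⟩ := Finset.mem_map.mp htT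
        obtain ⟨hcl, hc3⟩ := hS'edt.1 b₀ hb₀
        simp only [fEmb, Function.Embedding.coeFn_mk]
        refine ⟨fun x hx y hy hxy => ?_, by rw [Finset.card_map]; exact hc3⟩
        obtain ⟨x', hx', rfl⟩ := Finset.mem_map.mp (Finset.mem_coe.mp hx)
        obtain ⟨y', hy', rfl⟩ := Finset.mem_map.mp (Finset.mem_coe.mp hy)
        have h4 := hcl (Finset.mem_coe.mpr hx') (Finset.mem_coe.mpr hy')
          (fun h => hxy (congrArg emb h))
        rw [hadj] at h4
        exact h4.1
    · intro t₁ h₁ t₂ h₂ hne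
      rw [Finset.mem_union] at h₁ h₂
      rcases h₁ with h₁ | h₁ <;> rcases h₂ with h₂ | h₂
      · exact hS.2 t₁ h₁ t₂ h₂ hne
      · exact hkey t₁ h₁ t₂ h₂
      · rw [Finset.inter_comm]; exact hkey t₂ h₂ t₁ h₁
      · obtain ⟨a₀, ha₀, rfl⟩ := Finset.mem_map.mp h₁
        obtain ⟨b₀, hb₀, rfl⟩ := Finset.mem_map.mp h₂
        have hne' : a₀ ≠ b₀ := fun h => hne (by rw [h])
        simp only [fEmb, Function.Embedding.coeFn_mk]
        rw [← Finset.map_inter, Finset.card_map]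
        exact hS'edt.2 a₀ ha₀ b₀ hb₀ hne'
  have hnu1 : S.card + S'.card ≤ triNu G := by
    have h5 := le_triNu hedt
    rwa [Finset.card_union_of_disjoint hdisj, Finset.card_map] at h5
  omega
end

section
/- Let G be a finite simple graph, and let E₀ ⊆ E(G) be a reducible edge set, reducible using the set 𝒮 of edge-disjoint triangles and the edge set X. Let G' = (G − X) − E₀, the graph obtained from G by deleting the edges of X and the edges of E₀. If τ(G') ≤ 2ν(G'), then τ(G) ≤ 2ν(G). -/
open SimpleGraph

variable {V : Type*}

/-- If the edge set `E₀` is reducible using `S` and `X`, and the graph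
`G' = (G - X) - E₀` satisfies τ(G') ≤ 2ν(G'), then τ(G) ≤ 2ν(G). -/
theorem reducible_edge_set_wins [Fintype V] [DecidableEq V] (G : SimpleGraph V)
    (E₀ : Finset (Sym2 V)) (S : Finset (Finset V)) (X : Finset (Sym2 V))
    (hE₀ : E₀.Nonempty)
    (hE₀E : ↑E₀ ⊆ G.edgeSet)
    (hS : EdgeDisjointTriangles G S)
    (hXE : ↑X ⊆ G.edgeSet)
    (hcard : X.card ≤ 2 * S.card)
    (hii : ∀ t : Finset V, (G.deleteEdges ↑X).IsNClique 3 t → ∀ e ∈ E₀, ¬ ∀ x ∈ e, x ∈ t)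
    (hiii : ∀ t ∈ S, ∀ u ∈ t, ∀ v ∈ t, u ≠ v → s(u, v) ∉ E₀ → s(u, v) ∈ X)
    (h' : triTau ((G.deleteEdges ↑X).deleteEdges ↑E₀) ≤
          2 * triNu ((G.deleteEdges ↑X).deleteEdges ↑E₀)) :
    triTau G ≤ 2 * triNu G := by
  classical
  set G' := (G.deleteEdges ↑X).deleteEdges ↑E₀ with hG'
  -- adjacency in G'
  have hG'adj : ∀ a b : V, G'.Adj a b ↔ G.Adj a b ∧ s(a,b) ∉ X ∧ s(a,b) ∉ E₀ := by
    intro a b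
    simp [hG', deleteEdges_adj, and_assoc]
  have hG'le : G' ≤ G := le_trans (deleteEdges_le _) (deleteEdges_le _)
  -- obtain optimal cover Y' for G'
  have hτne : {n | ∃ Y : Finset (Sym2 V), ↑Y ⊆ G'.edgeSet ∧
      (G'.deleteEdges ↑Y).CliqueFree 3 ∧ Y.card = n}.Nonempty := by
    refine ⟨G'.edgeFinset.card, G'.edgeFinset, by simp, ?_, rfl⟩
    intro t ht
    rw [is3Clique_iff] at ht
    obtain ⟨a, b, c, hab, -, -, -⟩ := ht
    rw [deleteEdges_adj] at hab
    exact hab.2 (by simpa using hab.1)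
  obtain ⟨Y', hY'E, hY'free, hY'card⟩ := Nat.sInf_mem hτne
  -- obtain optimal packing S' for G'
  have hbdd : ∀ (H : SimpleGraph V), BddAbove {n | ∃ S : Finset (Finset V),
      EdgeDisjointTriangles H S ∧ S.card = n} := by
    intro H
    refine ⟨Fintype.card (Finset V), ?_⟩
    rintro n ⟨T, -, rfl⟩
    exact Finset.card_le_univ T
  have hνne : {n | ∃ S : Finset (Finset V), EdgeDisjointTriangles G' S ∧ S.card = n}.Nonempty :=
    ⟨0, ∅, ⟨by simp, by simp⟩, rfl⟩
  obtain ⟨S', hS'1, hS'card⟩ := Nat.sSup_mem hνne (hbdd G')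
  -- triangles of S do not live in G' and share no edge with triangles of G'
  have hSX : ∀ t ∈ S, ∀ u ∈ t, ∀ v ∈ t, u ≠ v → ¬ G'.Adj u v := by
    intro t ht u hu v hv huv hadj
    rw [hG'adj] at hadj
    exact hadj.2.1 (hiii t ht u hu v hv huv hadj.2.2)
  -- Step 1: τ(G) ≤ Y'.card + X.card
  have step1 : triTau G ≤ Y'.card + X.card := by
    have hmem : (Y' ∪ X).card ∈ {n | ∃ Y : Finset (Sym2 V), ↑Y ⊆ G.edgeSet ∧
        (G.deleteEdges ↑Y).CliqueFree 3 ∧ Y.card = n} := by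
      refine ⟨Y' ∪ X, ?_, ?_, rfl⟩
      · intro e he
        simp only [Finset.coe_union, Set.mem_union] at he
        rcases he with he | he
        · exact edgeSet_subset_edgeSet.mpr hG'le (hY'E he)
        · exact hXE he
      · intro t ht
        rw [is3Clique_iff] at ht
        obtain ⟨a, b, c, hab, hac, hbc, rfl⟩ := ht
        simp only [deleteEdges_adj, Finset.coe_union, Set.mem_union, not_or] at hab hac hbc
        -- each edge is in G, not in Y', not in X; show not in E₀ either
        have key : ∀ u v : V, G.Adj u v → s(u,v) ∉ (X : Set (Sym2 V)) →
            u ∈ ({a,b,c} : Finset V) → v ∈ ({a,b,c} : Finset V) → s(u,v) ∉ E₀ := by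
          intro u v huv hX hu hv he
          have htri : (G.deleteEdges ↑X).IsNClique 3 ({a,b,c} : Finset V) := by
            rw [is3Clique_iff]
            exact ⟨a, b, c, by simp [deleteEdges_adj, hab.1, hab.2.2],
              by simp [deleteEdges_adj, hac.1, hac.2.2],
              by simp [deleteEdges_adj, hbc.1, hbc.2.2], rfl⟩
          refine hii _ htri _ he ?_
          intro x hx
          rw [Sym2.mem_iff] at hx
          rcases hx with rfl | rfl
          · exact hu
          · exact hv
        have hG'free := hY'free ({a,b,c} : Finset V)
        apply hG'free
        rw [is3Clique_iff]
        refine ⟨a, b, c, ?_, ?_, ?_, rfl⟩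
        · rw [deleteEdges_adj, hG'adj]
          exact ⟨⟨hab.1, by simpa using hab.2.2,
            key a b hab.1 hab.2.2 (by simp) (by simp)⟩, hab.2.1⟩
        · rw [deleteEdges_adj, hG'adj]
          exact ⟨⟨hac.1, by simpa using hac.2.2,
            key a c hac.1 hac.2.2 (by simp) (by simp)⟩, hac.2.1⟩
        · rw [deleteEdges_adj, hG'adj]
          exact ⟨⟨hbc.1, by simpa using hbc.2.2,
            key b c hbc.1 hbc.2.2 (by simp) (by simp)⟩, hbc.2.1⟩
    calc triTau G ≤ (Y' ∪ X).card := Nat.sInf_le hmem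
      _ ≤ Y'.card + X.card := Finset.card_union_le _ _
  -- Step 2: triNu G' + S.card ≤ triNu G
  have step2 : triNu G' + S.card ≤ triNu G := by
    have hdisj : Disjoint S' S := by
      rw [Finset.disjoint_left]
      intro t htS' htS
      have h3 := (hS'1.1 t htS')
      rw [is3Clique_iff] at h3
      obtain ⟨a, b, c, hab, -, -, rfl⟩ := h3
      exact hSX _ htS a (by simp) b (by simp) hab.ne hab
    have hmem : (S' ∪ S).card ∈ {n | ∃ T : Finset (Finset V),
        EdgeDisjointTriangles G T ∧ T.card = n} := by
      refine ⟨S' ∪ S, ⟨?_, ?_⟩, rfl⟩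
      · intro t ht
        rcases Finset.mem_union.mp ht with ht | ht
        · exact (hS'1.1 t ht).mono hG'le
        · exact hS.1 t ht
      · intro t₁ ht₁ t₂ ht₂ hne
        have mixed : ∀ tS ∈ S, ∀ tS' ∈ S', (tS ∩ tS').card ≤ 1 := by
          intro tS htS tS' htS'
          by_contra hgt
          push_neg at hgt
          rw [Finset.one_lt_card] at hgt
          obtain ⟨u, hu, v, hv, huv⟩ := hgt
          simp only [Finset.mem_inter] at hu hv
          have hadj : G'.Adj u v := (hS'1.1 tS' htS').1 hu.2 hv.2 huv
          exact hSX tS htS u hu.1 v hv.1 huv hadj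
        rcases Finset.mem_union.mp ht₁ with h₁ | h₁ <;>
          rcases Finset.mem_union.mp ht₂ with h₂ | h₂
        · exact hS'1.2 t₁ h₁ t₂ h₂ hne
        · rw [Finset.inter_comm]; exact mixed t₂ h₂ t₁ h₁
        · exact mixed t₁ h₁ t₂ h₂
        · exact hS.2 t₁ h₁ t₂ h₂ hne
    have hle : (S' ∪ S).card ≤ triNu G := le_csSup (hbdd G) hmem
    rw [Finset.card_union_of_disjoint hdisj, hS'card] at hle
    exact hle
  have h1 : Y'.card = triTau G' := hY'card
  have h2 : S'.card = triNu G' := hS'card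
  omega
end

section
/- Let G be a finite simple graph and v ∈ V(G), and let G₀ be a nonempty union of connected components of G[N(v)]. If G₀ is a weak König–Egerváry graph, then G has a reducible set of edges. Moreover, if G[N(v)] itself is a weak König–Egerváry graph, then the singleton {v} is a reducible vertex set. -/
open SimpleGraph

variable {V : Type*}

/-- `V₀` is a reducible vertex set of `G`. -/
def ReducibleVertexSet [DecidableEq V] (G : SimpleGraph V) (V₀ : Finset V) : Prop :=
  V₀.Nonempty ∧
    ∃ (S : Finset (Finset V)) (X : Finset (Sym2 V)),
      EdgeDisjointTriangles G S ∧ ↑X ⊆ G.edgeSet ∧ X.card ≤ 2 * S.card ∧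
      (∀ t : Finset V, (G.deleteEdges ↑X).IsNClique 3 t → ∀ x ∈ V₀, x ∉ t) ∧
      (∀ t ∈ S, ∀ u ∈ t, ∀ v ∈ t, u ≠ v → u ∉ V₀ → v ∉ V₀ → s(u, v) ∈ X)

/-- `E₀` is a reducible edge set of `G`. -/
def ReducibleEdgeSet [DecidableEq V] (G : SimpleGraph V) (E₀ : Finset (Sym2 V)) : Prop :=
  E₀.Nonempty ∧ ↑E₀ ⊆ G.edgeSet ∧
    ∃ (S : Finset (Finset V)) (X : Finset (Sym2 V)),
      EdgeDisjointTriangles G S ∧ ↑X ⊆ G.edgeSet ∧ X.card ≤ 2 * S.card ∧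
      (∀ t : Finset V, (G.deleteEdges ↑X).IsNClique 3 t → ∀ e ∈ E₀, ¬ ∀ x ∈ e, x ∈ t) ∧
      (∀ t ∈ S, ∀ u ∈ t, ∀ v ∈ t, u ≠ v → s(u, v) ∉ E₀ → s(u, v) ∈ X)

/-- `M` is a matching of `H`: a set of pairwise disjoint edges of `H`. -/
def IsMatchingSet [DecidableEq V] (H : SimpleGraph V) (M : Finset (Sym2 V)) : Prop :=
  ↑M ⊆ H.edgeSet ∧ (M : Set (Sym2 V)).Pairwise fun e f => ∀ x ∈ e, x ∉ f

/-- `Q` is a vertex cover of `H`: a set of vertices meeting every edge of `H`. -/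
def IsVertexCoverSet (H : SimpleGraph V) (Q : Finset V) : Prop :=
  ∀ e ∈ H.edgeSet, ∃ x ∈ e, x ∈ Q

/-- `H` is a weak König--Egerváry graph: there are a matching `M` and a vertex set `Q`
with `|Q| ≤ |M|` such that `Q` is a vertex cover of `H - M`. -/
def WKE [DecidableEq V] (H : SimpleGraph V) : Prop :=
  ∃ (M : Finset (Sym2 V)) (Q : Finset V),
    IsMatchingSet H M ∧ Q.card ≤ M.card ∧ IsVertexCoverSet (H.deleteEdges ↑M) Q

open Finset in
lemma key_construction {V : Type*} [DecidableEq V] (G : SimpleGraph V) (v : V)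
    {W : Type*} [DecidableEq W] (ι : W → V) (hinj : Function.Injective ι)
    (hadj : ∀ w, G.Adj v (ι w)) (H : SimpleGraph W)
    (hH : ∀ a b, H.Adj a b ↔ G.Adj (ι a) (ι b))
    (hclosed : ∀ (a : W) (z : V), G.Adj v z → G.Adj (ι a) z → ∃ b, ι b = z)
    (hW : WKE H) :
    ∃ (S : Finset (Finset V)) (X : Finset (Sym2 V)),
      EdgeDisjointTriangles G S ∧ ↑X ⊆ G.edgeSet ∧ X.card ≤ 2 * S.card ∧
      (∀ t : Finset V, (G.deleteEdges ↑X).IsNClique 3 t → v ∈ t → ∀ a : W, ι a ∉ t) ∧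
      (∀ t ∈ S, v ∈ t ∧ ∀ u ∈ t, u ≠ v → ∃ a, ι a = u) ∧
      (∀ t ∈ S, ∀ u ∈ t, ∀ w ∈ t, u ≠ w → u ≠ v → w ≠ v → s(u, w) ∈ X) := by
  obtain ⟨M, Q, ⟨hMsub, hMdisj⟩, hQM, hcover⟩ := hW
  have hne : ∀ w : W, ι w ≠ v := fun w => (hadj w).ne'
  set F : Sym2 W → Finset V :=
    Sym2.lift ⟨fun a b => insert v {ι a, ι b}, fun a b => by beta_reduce; rw [Finset.pair_comm]⟩ with hF
  have hFs : ∀ a b : W, F s(a, b) = insert v {ι a, ι b} := fun a b => rfl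
  set X : Finset (Sym2 V) := M.image (Sym2.map ι) ∪ Q.image (fun q => s(v, ι q)) with hX
  have hMab : ∀ e ∈ M, ∀ a b : W, e = s(a, b) → a ≠ b := by
    intro e he a b hab
    have : e ∈ H.edgeSet := hMsub he
    rw [hab] at this
    exact fun h => (H.irrefl (h ▸ this))
  refine ⟨M.image F, X, ⟨?_, ?_⟩, ?_, ?_, ?_, ?_, ?_⟩
  · -- triangles
    intro t ht
    obtain ⟨e, he, rfl⟩ := Finset.mem_image.1 ht
    induction e using Sym2.ind with
    | _ a b =>
      rw [hFs]
      exact is3Clique_triple_iff.2 ⟨hadj a, hadj b, (hH a b).1 (hMsub he)⟩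
  · -- edge-disjoint
    intro t₁ ht₁ t₂ ht₂ hne12
    obtain ⟨e₁, he₁, rfl⟩ := Finset.mem_image.1 ht₁
    obtain ⟨e₂, he₂, rfl⟩ := Finset.mem_image.1 ht₂
    have hee : e₁ ≠ e₂ := fun h => hne12 (by rw [h])
    have hdisj := hMdisj (by exact he₁) (by exact he₂) hee
    induction e₁ using Sym2.ind with
    | _ a b =>
      induction e₂ using Sym2.ind with
      | _ c d =>
        have hnot : ∀ x : W, x ∈ s(a, b) → x ≠ c ∧ x ≠ d := by
          intro x hx
          have := hdisj x hx
          rw [Sym2.mem_iff] at this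
          exact ⟨fun h => this (Or.inl h), fun h => this (Or.inr h)⟩
        have hsub : F s(a, b) ∩ F s(c, d) ⊆ {v} := by
          intro x hx
          rw [Finset.mem_inter, hFs, hFs] at hx
          obtain ⟨hx1, hx2⟩ := hx
          simp only [Finset.mem_insert, Finset.mem_singleton] at hx1 hx2 ⊢
          rcases hx1 with rfl | rfl | rfl
          · rfl
          · rcases hx2 with h | h | h
            · exact absurd h (hne a)
            · exact absurd (hinj h) (hnot a (Sym2.mem_mk_left a b)).1
            · exact absurd (hinj h) (hnot a (Sym2.mem_mk_left a b)).2
          · rcases hx2 with h | h | h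
            · exact absurd h (hne b)
            · exact absurd (hinj h) (hnot b (Sym2.mem_mk_right a b)).1
            · exact absurd (hinj h) (hnot b (Sym2.mem_mk_right a b)).2
        calc (F s(a,b) ∩ F s(c,d)).card ≤ ({v} : Finset V).card := Finset.card_le_card hsub
          _ = 1 := Finset.card_singleton v
  · -- X ⊆ edgeSet
    intro e he
    rw [Finset.coe_union, Set.mem_union] at he
    rcases he with he | he
    · obtain ⟨f, hf, rfl⟩ := Finset.mem_coe.1 he |> Finset.mem_image.1
      induction f using Sym2.ind with
      | _ a b =>
        have : H.Adj a b := hMsub hf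
        exact (hH a b).1 this
    · obtain ⟨q, _, rfl⟩ := Finset.mem_coe.1 he |> Finset.mem_image.1
      exact hadj q
  · -- card bound
    have hScard : (M.image F).card = M.card := by
      rw [Finset.card_image_of_injOn]
      intro e₁ he₁ e₂ he₂ hFe
      induction e₁ using Sym2.ind with
      | _ a b =>
        induction e₂ using Sym2.ind with
        | _ c d =>
          rw [hFs, hFs] at hFe
          have hmem : ∀ x : W, ι x ∈ insert v ({ι a, ι b} : Finset V) → x = a ∨ x = b := by
            intro x hx
            simp only [Finset.mem_insert, Finset.mem_singleton] at hx
            rcases hx with h | h | h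
            · exact absurd h (hne x)
            · exact Or.inl (hinj h)
            · exact Or.inr (hinj h)
          have hc : c = a ∨ c = b := hmem c (hFe ▸ by simp)
          have hd : d = a ∨ d = b := hmem d (hFe ▸ by simp)
          have hab : a ≠ b := hMab _ he₁ a b rfl
          have hcd : c ≠ d := hMab _ he₂ c d rfl
          rw [Sym2.eq_iff]
          rcases hc with rfl | rfl
          · rcases hd with rfl | rfl
            · exact absurd rfl hcd
            · exact Or.inl ⟨rfl, rfl⟩
          · rcases hd with rfl | rfl
            · exact Or.inr ⟨rfl, rfl⟩
            · exact absurd rfl hcd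
    calc X.card ≤ (M.image (Sym2.map ι)).card + (Q.image (fun q => s(v, ι q))).card :=
          Finset.card_union_le _ _
      _ ≤ M.card + Q.card := add_le_add (Finset.card_image_le) (Finset.card_image_le)
      _ ≤ M.card + M.card := Nat.add_le_add_left hQM _
      _ = 2 * (M.image F).card := by rw [hScard]; ring
  · -- no triangle through v and range ι in G - X
    intro t ht hv a ha
    have hclique := ht.1
    have hcard := ht.2
    have hva : v ≠ ι a := (hne a).symm
    have hpair : ({v, ι a} : Finset V) ⊆ t := by
      intro x hx
      simp only [Finset.mem_insert, Finset.mem_singleton] at hx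
      rcases hx with rfl | rfl
      · exact hv
      · exact ha
    have hlt : ({v, ι a} : Finset V).card < t.card := by
      rw [hcard, Finset.card_insert_of_notMem (by simpa using hva), Finset.card_singleton]
      omega
    obtain ⟨y, hyt, hy⟩ : ∃ y ∈ t, y ∉ ({v, ι a} : Finset V) := by
      by_contra h
      push_neg at h
      exact absurd (Finset.card_le_card h) (not_le.2 hlt)
    simp only [Finset.mem_insert, Finset.mem_singleton, not_or] at hy
    obtain ⟨hyv, hya⟩ := hy
    have hAdjva : (G.deleteEdges ↑X).Adj v (ι a) := hclique hv ha hva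
    have hAdjvy : (G.deleteEdges ↑X).Adj v y := hclique hv hyt (Ne.symm hyv)
    have hAdjay : (G.deleteEdges ↑X).Adj (ι a) y := hclique ha hyt (Ne.symm hya)
    rw [deleteEdges_adj] at hAdjva hAdjvy hAdjay
    obtain ⟨b, rfl⟩ := hclosed a y hAdjvy.1 hAdjay.1
    have hab : H.Adj a b := (hH a b).2 hAdjay.1
    by_cases hM : s(a, b) ∈ M
    · apply hAdjay.2
      rw [hX]
      apply Finset.mem_coe.2
      apply Finset.mem_union_left
      exact Finset.mem_image.2 ⟨s(a, b), hM, rfl⟩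
    · have hedge : s(a, b) ∈ (H.deleteEdges ↑M).edgeSet := by
        rw [edgeSet_deleteEdges]
        exact ⟨hab, hM⟩
      obtain ⟨x, hxe, hxQ⟩ := hcover _ hedge
      rw [Sym2.mem_iff] at hxe
      have hmemX : s(v, ι x) ∈ X := by
        apply Finset.mem_union_right
        exact Finset.mem_image.2 ⟨x, hxQ, rfl⟩
      rcases hxe with rfl | rfl
      · exact hAdjva.2 (Finset.mem_coe.2 hmemX)
      · exact hAdjvy.2 (Finset.mem_coe.2 hmemX)
  · -- description of triangles in S
    intro t ht
    obtain ⟨e, he, rfl⟩ := Finset.mem_image.1 ht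
    induction e using Sym2.ind with
    | _ a b =>
      rw [hFs]
      refine ⟨Finset.mem_insert_self _ _, ?_⟩
      intro u hu huv
      simp only [Finset.mem_insert, Finset.mem_singleton] at hu
      rcases hu with rfl | rfl | rfl
      · exact absurd rfl huv
      · exact ⟨a, rfl⟩
      · exact ⟨b, rfl⟩
  · -- S-edges away from v are in X
    intro t ht u hu w hw huw huv hwv
    obtain ⟨e, he, rfl⟩ := Finset.mem_image.1 ht
    induction e using Sym2.ind with
    | _ a b =>
      rw [hFs] at hu hw
      simp only [Finset.mem_insert, Finset.mem_singleton] at hu hw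
      have hmemX : s(ι a, ι b) ∈ X := by
        apply Finset.mem_union_left
        exact Finset.mem_image.2 ⟨s(a, b), he, rfl⟩
      rcases hu with rfl | rfl | rfl
      · exact absurd rfl huv
      · rcases hw with rfl | rfl | rfl
        · exact absurd rfl hwv
        · exact absurd rfl huw
        · exact hmemX
      · rcases hw with rfl | rfl | rfl
        · exact absurd rfl hwv
        · exact (Sym2.eq_swap ▸ hmemX)
        · exact absurd rfl huw


/-- If `G₀` is a nonempty union of connected components of `G[N(v)]` and `G₀` is a weak
König--Egerváry graph, then `G` has a reducible edge set; moreover, if `G[N(v)]` itself is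
a weak König--Egerváry graph, then `{v}` is a reducible vertex set. -/
theorem wke_neighborhood_reducible [Fintype V] [DecidableEq V] (G : SimpleGraph V) (v : V)
    (C : Set ((G.induce (G.neighborSet v)).ConnectedComponent))
    (hC : C.Nonempty)
    (hWKE : WKE ((G.induce (G.neighborSet v)).induce
      {x | (G.induce (G.neighborSet v)).connectedComponentMk x ∈ C})) :
    (∃ E₀ : Finset (Sym2 V), ReducibleEdgeSet G E₀) ∧
      (WKE (G.induce (G.neighborSet v)) → ReducibleVertexSet G {v}) := by
  classical
  constructor
  · -- part 1
    have hinj : Function.Injective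
        (fun a : ↥{x : ↥(G.neighborSet v) |
            (G.induce (G.neighborSet v)).connectedComponentMk x ∈ C} => (a.1.1 : V)) :=
      fun a b h => Subtype.ext (Subtype.ext h)
    have hadj : ∀ w : ↥{x : ↥(G.neighborSet v) |
        (G.induce (G.neighborSet v)).connectedComponentMk x ∈ C}, G.Adj v w.1.1 :=
      fun w => w.1.2
    have hHadj : ∀ a b : ↥{x : ↥(G.neighborSet v) |
        (G.induce (G.neighborSet v)).connectedComponentMk x ∈ C},
        ((G.induce (G.neighborSet v)).induce
          {x | (G.induce (G.neighborSet v)).connectedComponentMk x ∈ C}).Adj a b ↔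
          G.Adj a.1.1 b.1.1 := fun a b => Iff.rfl
    have hclosed : ∀ (a : ↥{x : ↥(G.neighborSet v) |
        (G.induce (G.neighborSet v)).connectedComponentMk x ∈ C}) (z : V),
        G.Adj v z → G.Adj a.1.1 z → ∃ b : ↥{x : ↥(G.neighborSet v) |
          (G.induce (G.neighborSet v)).connectedComponentMk x ∈ C}, b.1.1 = z := by
      intro a z hvz haz
      have hz : z ∈ G.neighborSet v := hvz
      have hadj' : (G.induce (G.neighborSet v)).Adj a.1 ⟨z, hz⟩ := haz
      have hmk : (G.induce (G.neighborSet v)).connectedComponentMk ⟨z, hz⟩ ∈ C := by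
        rw [ConnectedComponent.connectedComponentMk_eq_of_adj hadj'.symm]
        exact a.2
      exact ⟨⟨⟨z, hz⟩, hmk⟩, rfl⟩
    obtain ⟨S, X, hEDT, hXsub, hXcard, hkey4, hkey5, hkey6⟩ :=
      key_construction G v _ hinj hadj _ hHadj hclosed hWKE
    haveI : Fintype ↥{x : ↥(G.neighborSet v) |
        (G.induce (G.neighborSet v)).connectedComponentMk x ∈ C} := Fintype.ofFinite _
    have hWne : Nonempty ↥{x : ↥(G.neighborSet v) |
        (G.induce (G.neighborSet v)).connectedComponentMk x ∈ C} := by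
      obtain ⟨c, hc⟩ := hC
      obtain ⟨x, rfl⟩ := c.exists_rep
      exact ⟨⟨x, hc⟩⟩
    refine ⟨Finset.univ.image (fun a : ↥{x : ↥(G.neighborSet v) |
        (G.induce (G.neighborSet v)).connectedComponentMk x ∈ C} => s(v, a.1.1)),
      ?_, ?_, S, X, hEDT, hXsub, hXcard, ?_, ?_⟩
    · obtain ⟨a⟩ := hWne
      exact ⟨s(v, a.1.1), Finset.mem_image.2 ⟨a, Finset.mem_univ _, rfl⟩⟩
    · intro e he
      obtain ⟨a, _, rfl⟩ := Finset.mem_image.1 (Finset.mem_coe.1 he)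
      exact hadj a
    · intro t ht e he hall
      obtain ⟨a, _, rfl⟩ := Finset.mem_image.1 he
      have hv : v ∈ t := hall v (Sym2.mem_mk_left _ _)
      have ha : a.1.1 ∈ t := hall a.1.1 (Sym2.mem_mk_right _ _)
      exact hkey4 t ht hv a ha
    · intro t ht u hu w hw huw hnE
      obtain ⟨hvt, hrest⟩ := hkey5 t ht
      by_cases huv : u = v
      · subst huv
        obtain ⟨a, rfl⟩ := hrest w hw (fun h => huw h.symm)
        exact absurd (Finset.mem_image.2 ⟨a, Finset.mem_univ _, rfl⟩) hnE
      · by_cases hwv : w = v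
        · subst hwv
          obtain ⟨a, rfl⟩ := hrest u hu huv
          exact absurd (Finset.mem_image.2 ⟨a, Finset.mem_univ _, by rw [Sym2.eq_swap]⟩) hnE
        · exact hkey6 t ht u hu w hw huw huv hwv
  · -- part 2
    intro hWKE2
    have hinj : Function.Injective (fun a : ↥(G.neighborSet v) => (a.1 : V)) :=
      fun a b h => Subtype.ext h
    have hadj : ∀ w : ↥(G.neighborSet v), G.Adj v w.1 := fun w => w.2
    have hHadj : ∀ a b : ↥(G.neighborSet v),
        (G.induce (G.neighborSet v)).Adj a b ↔ G.Adj a.1 b.1 := fun a b => Iff.rfl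
    have hclosed : ∀ (a : ↥(G.neighborSet v)) (z : V),
        G.Adj v z → G.Adj a.1 z → ∃ b : ↥(G.neighborSet v), b.1 = z :=
      fun a z hvz _ => ⟨⟨z, hvz⟩, rfl⟩
    obtain ⟨S, X, hEDT, hXsub, hXcard, hkey4, hkey5, hkey6⟩ :=
      key_construction G v _ hinj hadj _ hHadj hclosed hWKE2
    refine ⟨Finset.singleton_nonempty v, S, X, hEDT, hXsub, hXcard, ?_, ?_⟩
    · intro t ht x hx hxt
      rw [Finset.mem_singleton] at hx
      subst hx
      obtain ⟨y, hyt, hyx⟩ : ∃ y ∈ t, y ∉ ({x} : Finset V) := by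
        by_contra h
        push_neg at h
        have := Finset.card_le_card h
        rw [ht.2] at this
        simp only [Finset.card_singleton] at this
        omega
      rw [Finset.mem_singleton] at hyx
      have hAdj : (G.deleteEdges ↑X).Adj x y := ht.1 hxt hyt (Ne.symm hyx)
      have hGAdj : G.Adj x y := (SimpleGraph.deleteEdges_adj.1 hAdj).1
      exact hkey4 t ht hxt ⟨y, hGAdj⟩ hyt
    · intro t ht u hu w hw huw hunv hwnv
      rw [Finset.mem_singleton] at hunv hwnv
      exact hkey6 t ht u hu w hw huw hunv hwnv
end

section
/- If v is a vertex of a finite bipartite simple graph H, then v lies in some minimum vertex cover of H if and only if v is covered (saturated) by every maximum matching of H. -/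
open SimpleGraph

variable {V : Type*}

section KonigAux

variable [DecidableEq V]

lemma IsMatchingSet.eq_of_mem {H : SimpleGraph V} {M : Finset (Sym2 V)}
    (hM : IsMatchingSet H M) {e f : Sym2 V} (he : e ∈ M) (hf : f ∈ M) {x : V}
    (hx : x ∈ e) (hxf : x ∈ f) : e = f := by
  by_contra hne
  exact hM.2 (Finset.mem_coe.mpr he) (Finset.mem_coe.mpr hf) hne x hx hxf

lemma IsMatchingSet.subset {H : SimpleGraph V} {M M' : Finset (Sym2 V)}
    (hM : IsMatchingSet H M) (h : M' ⊆ M) : IsMatchingSet H M' :=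
  ⟨subset_trans (Finset.coe_subset.mpr h) hM.1, hM.2.mono (Finset.coe_subset.mpr h)⟩

lemma IsMatchingSet.insert {H : SimpleGraph V} {M' : Finset (Sym2 V)} {a b : V}
    (hM' : IsMatchingSet H M') (hab : H.Adj a b) (ha : ∀ e ∈ M', a ∉ e)
    (hb : ∀ e ∈ M', b ∉ e) : IsMatchingSet H (insert s(a, b) M') := by
  constructor
  · intro e he
    rw [Finset.coe_insert] at he
    rcases he with rfl | he
    · exact H.mem_edgeSet.mpr hab
    · exact hM'.1 he
  · rw [Finset.coe_insert]
    have hsymm : Symmetric fun e f : Sym2 V => ∀ x ∈ e, x ∉ f :=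
      fun e f h x hxf hxe => h x hxe hxf
    haveI : Std.Symm (fun e f : Sym2 V => ∀ x ∈ e, x ∉ f) := ⟨fun a b h => hsymm h⟩
    rw [Set.pairwise_insert_of_symm]
    refine ⟨hM'.2, fun f hf _ x hx hxf => ?_⟩
    rcases Sym2.mem_iff.mp hx with rfl | rfl
    · exact ha f (Finset.mem_coe.mp hf) hxf
    · exact hb f (Finset.mem_coe.mp hf) hxf

/-- Weak duality: any matching is at most as large as any vertex cover. -/
lemma matching_card_le_cover_card {H : SimpleGraph V} {M : Finset (Sym2 V)} {Q : Finset V}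
    (hM : IsMatchingSet H M) (hQ : IsVertexCoverSet H Q) : M.card ≤ Q.card := by
  classical
  set g : Sym2 V → V := fun e => if h : ∃ x ∈ e, x ∈ Q then h.choose else (Quot.out e).1 with hg
  have hgspec : ∀ e ∈ M, g e ∈ e ∧ g e ∈ Q := by
    intro e he
    have h : ∃ x ∈ e, x ∈ Q := hQ e (hM.1 (Finset.mem_coe.mpr he))
    simp only [hg, dif_pos h]
    exact h.choose_spec
  refine Finset.card_le_card_of_injOn g (fun e he => (hgspec e he).2) ?_
  intro e he f hf hef
  exact hM.eq_of_mem (Finset.mem_coe.mp he) (Finset.mem_coe.mp hf)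
    (hgspec e (Finset.mem_coe.mp he)).1 (hef ▸ (hgspec f (Finset.mem_coe.mp hf)).1)

/-- Alternating reachability: `Reach H A M M' a` means that starting from the maximum
matching `M` there is a sequence of alternating-path swaps yielding a matching `M'` of the
same size that exposes the vertex `a ∈ A`. -/
inductive Reach (H : SimpleGraph V) (A : Set V) (M : Finset (Sym2 V)) :
    Finset (Sym2 V) → V → Prop
  | base (u : V) (hu : u ∈ A) (hsat : ∀ e ∈ M, u ∉ e) : Reach H A M M u
  | step (M' : Finset (Sym2 V)) (a b z : V) (h : Reach H A M M' a) (hab : H.Adj a b)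
      (hzb : s(z, b) ∈ M') : Reach H A M (insert s(a, b) (M'.erase s(z, b))) z

variable {H : SimpleGraph V} {A : Set V} {M : Finset (Sym2 V)}

lemma reach_inv (hA : ∀ ⦃x y⦄, H.Adj x y → (x ∈ A ↔ y ∉ A)) (hM : IsMatchingSet H M)
    {M' : Finset (Sym2 V)} {a : V} (h : Reach H A M M' a) :
    IsMatchingSet H M' ∧ M'.card = M.card ∧ (∀ e ∈ M', a ∉ e) ∧ a ∈ A ∧
      (∀ x, x ∉ A → (∃ e ∈ M', x ∈ e) → (∃ e ∈ M, x ∈ e)) := by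
  induction h with
  | base u hu hsat => exact ⟨hM, rfl, hsat, hu, fun x _ hx => hx⟩
  | step M' a b z h hab hzb ih =>
    obtain ⟨hM', hcard, hexp, haA, hB⟩ := ih
    have hbA : b ∉ A := (hA hab).mp haA
    have hzbH : H.Adj z b := H.mem_edgeSet.mp (hM'.1 (Finset.mem_coe.mpr hzb))
    have hzA : z ∈ A := (hA hzbH).mpr hbA
    have hza : z ≠ a := fun hh => hexp _ hzb (hh ▸ Sym2.mem_mk_left z b)
    have hbuniq : ∀ e ∈ M', b ∈ e → e = s(z, b) :=
      fun e he hbe => hM'.eq_of_mem he hzb hbe (Sym2.mem_mk_right z b)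
    have herase : IsMatchingSet H (M'.erase s(z, b)) :=
      hM'.subset (Finset.erase_subset _ _)
    have hmm : IsMatchingSet H (insert s(a, b) (M'.erase s(z, b))) := by
      refine herase.insert hab (fun e he => hexp e (Finset.mem_of_mem_erase he)) ?_
      intro e he hbe
      exact Finset.ne_of_mem_erase he (hbuniq e (Finset.mem_of_mem_erase he) hbe)
    have hnotmem : s(a, b) ∉ M'.erase s(z, b) := by
      intro hmem
      exact Finset.ne_of_mem_erase hmem
        (hbuniq _ (Finset.mem_of_mem_erase hmem) (Sym2.mem_mk_right a b))
    refine ⟨hmm, ?_, ?_, hzA, ?_⟩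
    · rw [Finset.card_insert_of_notMem hnotmem, Finset.card_erase_of_mem hzb]
      have : 1 ≤ M'.card := Finset.card_pos.mpr ⟨_, hzb⟩
      omega
    · intro e he hze
      rcases Finset.mem_insert.mp he with rfl | he
      · rcases Sym2.mem_iff.mp hze with rfl | rfl
        · exact hza rfl
        · exact hzbH.ne rfl
      · exact Finset.ne_of_mem_erase he
          (hM'.eq_of_mem (Finset.mem_of_mem_erase he) hzb hze (Sym2.mem_mk_left z b))
    · rintro x hxA ⟨e, he, hxe⟩
      rcases Finset.mem_insert.mp he with rfl | he
      · rcases Sym2.mem_iff.mp hxe with rfl | rfl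
        · exact absurd haA hxA
        · exact hB x hxA ⟨s(z, x), hzb, Sym2.mem_mk_right z x⟩
      · exact hB x hxA ⟨e, Finset.mem_of_mem_erase he, hxe⟩

/-- No augmenting step: if `M'` (a reachable same-size matching) exposes `a` and `b`,
with `a ~ b`, then `M` was not maximum. -/
lemma no_aug (hA : ∀ ⦃x y⦄, H.Adj x y → (x ∈ A ↔ y ∉ A)) (hM : IsMatchingSet H M)
    (hmax : ∀ M'', IsMatchingSet H M'' → M''.card ≤ M.card)
    {M' : Finset (Sym2 V)} {a b : V} (h : Reach H A M M' a) (hab : H.Adj a b)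
    (hb : ∀ e ∈ M', b ∉ e) : False := by
  obtain ⟨hM', hcard, hexp, -, -⟩ := reach_inv hA hM h
  have hmm : IsMatchingSet H (insert s(a, b) M') := hM'.insert hab hexp hb
  have hnm : s(a, b) ∉ M' := fun hmem => hb _ hmem (Sym2.mem_mk_right a b)
  have := hmax _ hmm
  rw [Finset.card_insert_of_notMem hnm, hcard] at this
  omega

lemma reach_closure (hA : ∀ ⦃x y⦄, H.Adj x y → (x ∈ A ↔ y ∉ A)) (hM : IsMatchingSet H M)
    {M' : Finset (Sym2 V)} {a : V} (h : Reach H A M M' a) :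
    ∀ b a₁ a₂, b ∉ A → s(a₁, b) ∈ M → s(a₂, b) ∈ M' → a₁ ≠ a₂ →
      ∃ M₂, Reach H A M M₂ a₁ := by
  induction h with
  | base u hu hsat =>
    intro b a₁ a₂ hbA h1 h2 hne
    exfalso
    have hadj : H.Adj a₁ b := H.mem_edgeSet.mp (hM.1 (Finset.mem_coe.mpr h1))
    have := hM.eq_of_mem h1 h2 (Sym2.mem_mk_right a₁ b) (Sym2.mem_mk_right a₂ b)
    rcases Sym2.eq_iff.mp this with ⟨h3, -⟩ | ⟨h3, -⟩
    · exact hne h3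
    · exact hadj.ne h3
  | step M' a b₀ z h hab hzb ih =>
    intro b a₁ a₂ hbA h1 h2 hne
    rcases Finset.mem_insert.mp h2 with heq | h2
    · have haA : a ∈ A := (reach_inv hA hM h).2.2.2.1
      rcases Sym2.eq_iff.mp heq with ⟨-, rfl⟩ | ⟨-, h4⟩
      · by_cases hz : a₁ = z
        · exact ⟨_, hz ▸ Reach.step M' a b z h hab hzb⟩
        · exact ih b a₁ z hbA h1 hzb hz
      · exact absurd (h4 ▸ haA) hbA
    · exact ih b a₁ a₂ hbA h1 (Finset.mem_of_mem_erase h2) hne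

lemma reach_of_mem_matching (hA : ∀ ⦃x y⦄, H.Adj x y → (x ∈ A ↔ y ∉ A))
    (hM : IsMatchingSet H M) (hmax : ∀ M'', IsMatchingSet H M'' → M''.card ≤ M.card)
    {M' : Finset (Sym2 V)} {a₀ x y : V} (hy : y ∉ A) (h : Reach H A M M' a₀)
    (hadj : H.Adj a₀ y) (hxy : s(x, y) ∈ M) : ∃ M₂, Reach H A M M₂ x := by
  by_cases hyM' : ∃ e ∈ M', y ∈ e
  · obtain ⟨e', he', hye'⟩ := hyM'
    set z := Sym2.Mem.other hye' with hzdef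
    have hz : s(z, y) ∈ M' := by
      have hspec : s(y, z) = e' := Sym2.other_spec hye'
      rw [Sym2.eq_swap, hspec]
      exact he'
    by_cases hzx : z = x
    · exact ⟨_, Reach.step M' a₀ y x h hadj (hzx ▸ hz)⟩
    · exact reach_closure hA hM h y x z hy hxy hz (fun hh => hzx hh.symm)
  · push_neg at hyM'
    exact absurd (no_aug hA hM hmax h hadj hyM') (fun hh => hh)

/-- König's theorem: in a finite bipartite graph there is a vertex cover of size at
most the size of a maximum matching. -/
lemma konig [Fintype V] (H : SimpleGraph V) (hbip : H.Colorable 2) {M : Finset (Sym2 V)}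
    (hM : IsMatchingSet H M) (hmax : ∀ M', IsMatchingSet H M' → M'.card ≤ M.card) :
    ∃ C : Finset V, IsVertexCoverSet H C ∧ C.card ≤ M.card := by
  classical
  obtain ⟨c⟩ := hbip
  set A : Set V := {x | c x = 0} with hAdef
  have hA : ∀ ⦃x y⦄, H.Adj x y → (x ∈ A ↔ y ∉ A) := by
    intro x y hxy
    have hne := c.valid hxy
    have key : ∀ i j : Fin 2, i ≠ j → (i = 0 ↔ ¬ j = 0) := by decide
    exact key _ _ hne
  set RA : Set V := {x | ∃ M', Reach H A M M' x} with hRAdef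
  set C : Finset V := Finset.univ.filter
    (fun x => (x ∈ A ∧ x ∉ RA) ∨ (x ∉ A ∧ ∃ a ∈ RA, H.Adj a x)) with hCdef
  have memC : ∀ x, x ∈ C ↔ ((x ∈ A ∧ x ∉ RA) ∨ (x ∉ A ∧ ∃ a ∈ RA, H.Adj a x)) := by
    intro x
    simp [hCdef]
  have hbase : ∀ x, x ∈ A → ¬ (∃ e ∈ M, x ∈ e) → x ∈ RA := by
    intro x hxA hx
    push_neg at hx
    exact ⟨M, Reach.base x hxA hx⟩
  have hcov : IsVertexCoverSet H C := by
    intro e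
    induction e using Sym2.ind with
    | _ x y =>
      intro he
      have hxy : H.Adj x y := H.mem_edgeSet.mp he
      by_cases hxA : x ∈ A
      · by_cases hxRA : x ∈ RA
        · exact ⟨y, Sym2.mem_mk_right x y, (memC y).mpr (Or.inr ⟨(hA hxy).mp hxA,
            x, hxRA, hxy⟩)⟩
        · exact ⟨x, Sym2.mem_mk_left x y, (memC x).mpr (Or.inl ⟨hxA, hxRA⟩)⟩
      · have hyA : y ∈ A := by
          by_contra hyA
          exact hxA ((hA hxy).mpr hyA)
        by_cases hyRA : y ∈ RA
        · exact ⟨x, Sym2.mem_mk_left x y, (memC x).mpr (Or.inr ⟨hxA, y, hyRA, hxy.symm⟩)⟩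
        · exact ⟨y, Sym2.mem_mk_right x y, (memC y).mpr (Or.inl ⟨hyA, hyRA⟩)⟩
  have hmatched : ∀ x ∈ C, ∃ e ∈ M, x ∈ e := by
    intro x hx
    rcases (memC x).mp hx with ⟨hxA, hxRA⟩ | ⟨hxA, a, ⟨M', hreach⟩, hadj⟩
    · by_contra hxm
      exact hxRA (hbase x hxA hxm)
    · by_contra hxm
      have hinv := reach_inv hA hM hreach
      have hxM' : ∀ e ∈ M', x ∉ e := by
        intro e he hxe
        exact hxm (hinv.2.2.2.2 x hxA ⟨e, he, hxe⟩)
      exact no_aug hA hM hmax hreach hadj hxM'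
  refine ⟨C, hcov, ?_⟩
  set g : V → Sym2 V := fun x => if h : ∃ e ∈ M, x ∈ e then h.choose else s(x, x) with hgdef
  have hgspec : ∀ x ∈ C, g x ∈ M ∧ x ∈ g x := by
    intro x hx
    have h := hmatched x hx
    simp only [hgdef, dif_pos h]
    exact h.choose_spec
  refine Finset.card_le_card_of_injOn g (fun x hx => (hgspec x hx).1) ?_
  intro x hx y hy hgxy
  by_contra hne
  have hxC := Finset.mem_coe.mp hx
  have hyC := Finset.mem_coe.mp hy
  have hxg := hgspec x hxC
  have hyg := hgspec y hyC
  have hedge : s(x, y) ∈ M := by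
    have : g x = s(x, y) := (Sym2.mem_and_mem_iff hne).mp ⟨hxg.2, hgxy ▸ hyg.2⟩
    exact this ▸ hxg.1
  have hadjxy : H.Adj x y := H.mem_edgeSet.mp (hM.1 (Finset.mem_coe.mpr hedge))
  -- one endpoint is in A, the other is not
  have key : ∀ p q : V, p ∈ C → q ∈ C → H.Adj p q → s(p, q) ∈ M → p ∈ A → False := by
    intro p q hpC hqC hpq hpqM hpA
    have hqA : q ∉ A := (hA hpq).mp hpA
    rcases (memC p).mp hpC with ⟨-, hpRA⟩ | ⟨hpA', -⟩
    · rcases (memC q).mp hqC with ⟨hqA', -⟩ | ⟨-, a, ⟨M', hreach⟩, hadj⟩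
      · exact hqA hqA'
      · exact hpRA (reach_of_mem_matching hA hM hmax hqA hreach hadj hpqM)
    · exact hpA' hpA
  by_cases hxA : x ∈ A
  · exact key x y hxC hyC hadjxy hedge hxA
  · have hyA : y ∈ A := by
      rcases (memC y).mp hyC with ⟨hyA, -⟩ | ⟨hyB, -⟩
      · exact hyA
      · exact absurd (not_not.mp (fun h => hxA ((hA hadjxy).mpr h))) hyB
    exact key y x hyC hxC hadjxy.symm (by rwa [Sym2.eq_swap] at hedge) hyA

end KonigAux

/-- In a finite bipartite graph `H`, a vertex `v` lies in some minimum vertex cover if and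
only if `v` is covered by every maximum matching. -/
theorem mem_min_cover_iff_covered_by_max_matchings [Fintype V] [DecidableEq V]
    (H : SimpleGraph V) (hbip : H.Colorable 2) (v : V) :
    (∃ Q : Finset V, IsVertexCoverSet H Q ∧
        (∀ Q' : Finset V, IsVertexCoverSet H Q' → Q.card ≤ Q'.card) ∧ v ∈ Q) ↔
      (∀ M : Finset (Sym2 V), IsMatchingSet H M →
        (∀ M' : Finset (Sym2 V), IsMatchingSet H M' → M'.card ≤ M.card) →
          ∃ e ∈ M, v ∈ e) := by
  classical
  constructor
  · rintro ⟨Q, hQcov, hQmin, hvQ⟩ M hM hmax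
    obtain ⟨C, hCcov, hCcard⟩ := konig H hbip hM hmax
    have h1 : Q.card ≤ C.card := hQmin C hCcov
    have h2 : M.card ≤ Q.card := matching_card_le_cover_card hM hQcov
    set g : Sym2 V → V := fun e => if h : ∃ x ∈ e, x ∈ Q then h.choose else v with hgdef
    have hgspec : ∀ e ∈ M, g e ∈ e ∧ g e ∈ Q := by
      intro e he
      have h : ∃ x ∈ e, x ∈ Q := hQcov e (hM.1 (Finset.mem_coe.mpr he))
      simp only [hgdef, dif_pos h]
      exact h.choose_spec
    have hinj : Set.InjOn g M := by
      intro e he f hf hef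
      exact hM.eq_of_mem (Finset.mem_coe.mp he) (Finset.mem_coe.mp hf)
        (hgspec e (Finset.mem_coe.mp he)).1 (hef ▸ (hgspec f (Finset.mem_coe.mp hf)).1)
    have himg : M.image g ⊆ Q := by
      intro x hx
      obtain ⟨e, he, rfl⟩ := Finset.mem_image.mp hx
      exact (hgspec e he).2
    have hcardimg : (M.image g).card = M.card := Finset.card_image_of_injOn hinj
    have : M.image g = Q := Finset.eq_of_subset_of_card_le himg (by omega)
    rw [← this] at hvQ
    obtain ⟨e, he, hge⟩ := Finset.mem_image.mp hvQ
    exact ⟨e, he, hge ▸ (hgspec e he).1⟩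
  · intro hcov
    obtain ⟨M, hMmem, hMmax⟩ := Finset.exists_max_image
      (Finset.univ.filter (fun N : Finset (Sym2 V) => IsMatchingSet H N)) Finset.card
      ⟨∅, by rw [Finset.mem_filter]; simp [IsMatchingSet]⟩
    have hM : IsMatchingSet H M := (Finset.mem_filter.mp hMmem).2
    have hmax : ∀ M', IsMatchingSet H M' → M'.card ≤ M.card := fun M' h =>
      hMmax M' (Finset.mem_filter.mpr ⟨Finset.mem_univ _, h⟩)
    obtain ⟨ev, hev, hvev⟩ := hcov M hM hmax
    set H' := H.deleteEdges {e | v ∈ e} with hH'def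
    have hH'le : H' ≤ H := deleteEdges_le _
    have hbip' : H'.Colorable 2 := hbip.mono_left hH'le
    have hH'edge : ∀ e, e ∈ H'.edgeSet ↔ e ∈ H.edgeSet ∧ v ∉ e := by
      intro e
      rw [hH'def, edgeSet_deleteEdges]
      simp
    have hsub : ∀ M', IsMatchingSet H' M' → IsMatchingSet H M' := by
      intro M' h
      exact ⟨subset_trans h.1 (edgeSet_mono hH'le), h.2⟩
    have hlt : ∀ M', IsMatchingSet H' M' → M'.card < M.card := by
      intro M' h
      rcases lt_or_eq_of_le (hmax M' (hsub M' h)) with hlt | heq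
      · exact hlt
      · exfalso
        have hmax' : ∀ M'', IsMatchingSet H M'' → M''.card ≤ M'.card := fun M'' hh =>
          heq ▸ hmax M'' hh
        obtain ⟨e, heM', hve⟩ := hcov M' (hsub M' h) hmax'
        exact ((hH'edge e).mp (h.1 (Finset.mem_coe.mpr heM'))).2 hve
    set M₀ := M.erase ev with hM₀def
    have hM₀ : IsMatchingSet H' M₀ := by
      constructor
      · intro e he
        have heM : e ∈ M := Finset.mem_of_mem_erase (Finset.mem_coe.mp he)
        rw [hH'edge]
        refine ⟨hM.1 (Finset.mem_coe.mpr heM), ?_⟩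
        intro hve
        exact Finset.ne_of_mem_erase (Finset.mem_coe.mp he)
          (hM.eq_of_mem heM hev hve hvev)
      · exact (hM.subset (Finset.erase_subset _ _)).2
    have hM₀card : M₀.card = M.card - 1 := Finset.card_erase_of_mem hev
    have hM₀max : ∀ M', IsMatchingSet H' M' → M'.card ≤ M₀.card := by
      intro M' h
      have := hlt M' h
      omega
    obtain ⟨C', hC'cov, hC'card⟩ := konig H' hbip' hM₀ hM₀max
    refine ⟨insert v C', ?_, ?_, Finset.mem_insert_self v C'⟩
    · intro e he
      by_cases hv : v ∈ e
      · exact ⟨v, hv, Finset.mem_insert_self v C'⟩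
      · obtain ⟨x, hxe, hxC⟩ := hC'cov e ((hH'edge e).mpr ⟨he, hv⟩)
        exact ⟨x, hxe, Finset.mem_insert_of_mem hxC⟩
    · intro Q' hQ'
      have h1 : M.card ≤ Q'.card := matching_card_le_cover_card hM hQ'
      have h2 : (insert v C').card ≤ C'.card + 1 := Finset.card_insert_le _ _
      have h3 : 1 ≤ M.card := Finset.card_pos.mpr ⟨ev, hev⟩
      omega
end

section
/- If H is a finite 2-connected simple graph containing no odd cycle of length greater than 3, then for every vertex v ∈ V(H) there exist a matching M of H and a vertex set Q ⊆ V(H) such that (1) |Q| ≤ |M|, (2) Q is a vertex cover of H − M (the graph obtained by deleting the edges of M), and (3) either v ∈ Q or v is not an endpoint of any edge of M. In particular, H is a weak König–Egerváry graph. -/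
open SimpleGraph

variable {V : Type*}

namespace WKEaux

/-- A path from `v` to `u` of length ≥ 2 does not use the closing edge `s(u,v)`. -/
lemma path_no_closing_edge {H : SimpleGraph V} {v u : V} (q : H.Walk v u)
    (hnd : q.support.Nodup) (hlen : 2 ≤ q.length) : s(u, v) ∉ q.edges := by
  cases q with
  | nil => simp
  | @cons _ y _ h' q' =>
    intro hmem
    rw [SimpleGraph.Walk.edges_cons, List.mem_cons] at hmem
    rw [SimpleGraph.Walk.support_cons, List.nodup_cons] at hnd
    rcases hmem with heq | hmem
    · rw [Sym2.eq_iff] at heq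
      rcases heq with ⟨rfl, rfl⟩ | ⟨rfl, -⟩
      · exact hnd.1 q'.end_mem_support
      · cases q' with
        | nil => simp at hlen
        | @cons _ z _ h'' q'' =>
          have := hnd.2
          rw [SimpleGraph.Walk.support_cons, List.nodup_cons] at this
          exact this.1 q''.end_mem_support
    · have : v ∈ q'.support := SimpleGraph.Walk.fst_mem_support_of_mem_edges q' (by
        rwa [Sym2.eq_swap] at hmem)
      exact hnd.1 this

/-- From a closed walk of odd length one can extract an odd cycle. -/
lemma odd_closed_walk_to_cycle {H : SimpleGraph V} [DecidableEq V] :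
    ∀ (n : ℕ) {u : V} (w : H.Walk u u), w.length ≤ n → Odd w.length →
      ∃ (x : V) (c : H.Walk x x), c.IsCycle ∧ Odd c.length := by
  intro n
  induction n with
  | zero =>
    intro u w hle hodd
    interval_cases h : w.length
    · simp at hodd
  | succ n ih =>
    intro u w hle hodd
    -- length is odd hence ≥ 1; rule out length 1
    have h1 : w.length ≠ 1 := by
      intro h1
      cases w with
      | nil => simp at h1
      | cons h q =>
        rw [SimpleGraph.Walk.length_cons, Nat.add_eq_right] at h1
        have : q.Nil := SimpleGraph.Walk.nil_iff_length_eq.mpr h1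
        cases q with
        | nil => exact H.irrefl h
        | cons _ _ => simp [SimpleGraph.Walk.Nil] at this
    by_cases hnd : w.support.tail.Nodup
    · -- it is a cycle
      refine ⟨u, w, ?_, hodd⟩
      cases w with
      | nil => simp at hodd
      | @cons _ v _ h q =>
        rw [SimpleGraph.Walk.cons_isCycle_iff]
        have hsup : q.support.Nodup := by
          simpa using hnd
        refine ⟨(SimpleGraph.Walk.isPath_def q).mpr hsup, ?_⟩
        apply path_no_closing_edge q hsup
        have : 3 ≤ (SimpleGraph.Walk.cons h q).length := by
          rcases hodd with ⟨k, hk⟩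
          omega
        rw [SimpleGraph.Walk.length_cons] at this
        omega
    · -- find a repeated vertex and split
      obtain ⟨x, hx2⟩ : ∃ x, 2 ≤ w.support.tail.count x := by
        by_contra hc
        push_neg at hc
        exact hnd (List.nodup_iff_count_le_one.mpr fun x => by
          have := hc x; omega)
      have hxmem : x ∈ w.support := by
        apply List.mem_of_mem_tail
        exact List.count_pos_iff.mp (by omega)
      obtain ⟨c, hc⟩ : ∃ c : H.Walk x x, c = w.rotate x hxmem := ⟨_, rfl⟩
      have hlenc : c.length = w.length := by
        rw [hc]
        have := congrArg SimpleGraph.Walk.length (w.take_spec hxmem)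
        rw [SimpleGraph.Walk.length_append] at this
        unfold SimpleGraph.Walk.rotate
        rw [SimpleGraph.Walk.length_append]
        omega
      have hcount : 2 ≤ c.support.tail.count x := by
        have hperm := (SimpleGraph.Walk.support_rotate w x hxmem).perm
        rw [hc, hperm.count_eq]; exact hx2
      cases c with
      | nil =>
        rw [SimpleGraph.Walk.length_nil] at hlenc
        rcases hodd with ⟨k, hk⟩
        omega
      | @cons _ y _ h q =>
        have htail : (SimpleGraph.Walk.cons h q).support.tail = q.support := by
          rw [SimpleGraph.Walk.support_cons]; rfl
        rw [htail] at hcount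
        have hxq : x ∈ q.support := List.count_pos_iff.mp (by omega)
        have hspec := q.take_spec hxq
        have hq1count := q.count_support_takeUntil_eq_one hxq
        -- q2 is nonnil
        have hq2 : 1 ≤ (q.dropUntil x hxq).length := by
          by_contra hq2
          push_neg at hq2
          have : (q.dropUntil x hxq).length = 0 := by omega
          have hnil : (q.dropUntil x hxq).support = [x] := by
            cases hdq : q.dropUntil x hxq with
            | nil => simp
            | cons _ _ => rw [hdq] at this; simp at this
          have hcnt : q.support.count x = 1 := by
            conv_lhs => rw [← hspec]
            rw [SimpleGraph.Walk.support_append, List.count_append, hq1count, hnil]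
            simp
          rw [hcnt] at hcount
          omega
        have hsum : 1 + (q.takeUntil x hxq).length + (q.dropUntil x hxq).length
            = (SimpleGraph.Walk.cons h q).length := by
          rw [SimpleGraph.Walk.length_cons]
          have := congrArg SimpleGraph.Walk.length hspec
          rw [SimpleGraph.Walk.length_append] at this
          omega
        have hodd' : Odd ((SimpleGraph.Walk.cons h q).length) := by rw [hlenc]; exact hodd
        set w1 := SimpleGraph.Walk.cons h (q.takeUntil x hxq) with hw1
        set w2 := q.dropUntil x hxq with hw2
        have hl1 : w1.length = 1 + (q.takeUntil x hxq).length := by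
          rw [hw1, SimpleGraph.Walk.length_cons]; omega
        rcases Nat.even_or_odd w1.length with he | ho
        · -- w2 odd
          have : Odd w2.length := by
            have : w1.length + w2.length = (SimpleGraph.Walk.cons h q).length := by omega
            rcases he with ⟨k, hk⟩
            rcases hodd' with ⟨m, hm⟩
            refine ⟨m - k, by omega⟩
          exact ih w2 (by omega) this
        · exact ih w1 (by omega) ho



lemma cons_concat_isCycle {H : SimpleGraph V} {y t a : V} (p : H.Walk y t)
    (hp : p.IsPath) (ha : a ∉ p.support) (h1 : H.Adj a y) (h2 : H.Adj t a)
    (hyt : y ≠ t) : (SimpleGraph.Walk.cons h1 (p.concat h2)).IsCycle := by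
  rw [SimpleGraph.Walk.cons_isCycle_iff]
  constructor
  · rw [SimpleGraph.Walk.isPath_def, SimpleGraph.Walk.support_concat]
    simp only [List.concat_eq_append, List.nodup_append, List.nodup_cons, List.nodup_nil]
    exact ⟨((SimpleGraph.Walk.isPath_def p).mp hp), ⟨by simp, by simp⟩, by
      intro z hz; simp; rintro rfl; exact ha hz⟩
  · rw [SimpleGraph.Walk.edges_concat]
    intro hmem
    rw [List.concat_eq_append, List.mem_append] at hmem
    rcases hmem with hmem | hmem
    · exact ha (SimpleGraph.Walk.fst_mem_support_of_mem_edges p hmem)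
    · rw [List.mem_singleton, Sym2.eq_iff] at hmem
      rcases hmem with ⟨rfl, rfl⟩ | ⟨-, rfl⟩
      · exact ha p.end_mem_support
      · exact hyt rfl

lemma no5 {H : SimpleGraph V}
    (hodd : ∀ (u : V) (w : H.Walk u u), w.IsCycle → Odd w.length → w.length ≤ 3)
    {a b c d e : V} (h1 : H.Adj a b) (h2 : H.Adj b c) (h3 : H.Adj c d)
    (h4 : H.Adj d e) (h5 : H.Adj e a) (hac : a ≠ c) (had : a ≠ d)
    (hbd : b ≠ d) (hbe : b ≠ e) (hce : c ≠ e) : False := by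
  have hab := h1.ne
  have hbc := h2.ne
  have hcd := h3.ne
  have hde := h4.ne
  have hea := h5.ne
  set w : H.Walk a a :=
    SimpleGraph.Walk.cons h1 (SimpleGraph.Walk.cons h2 (SimpleGraph.Walk.cons h3
      (SimpleGraph.Walk.cons h4 (SimpleGraph.Walk.cons h5 SimpleGraph.Walk.nil)))) with hw
  have hcyc : w.IsCycle := by
    rw [SimpleGraph.Walk.isCycle_def]
    refine ⟨?_, by simp [hw], ?_⟩
    · rw [SimpleGraph.Walk.isTrail_def, hw]
      simp [Sym2.eq_iff]
      aesop
    · rw [hw]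
      simp [Sym2.eq_iff]
      aesop
  have hlen : w.length = 5 := by simp [hw]
  have := hodd a w hcyc (by rw [hlen]; decide)
  omega

lemma cycle3_exists {H : SimpleGraph V} {x : V} (c : H.Walk x x) (hl : c.length = 3) :
    ∃ p q : V, H.Adj x p ∧ H.Adj p q ∧ H.Adj q x := by
  cases c with
  | nil => simp at hl
  | cons h q =>
    cases q with
    | nil => simp at hl
    | cons h2 q2 =>
      cases q2 with
      | nil => simp at hl
      | cons hh3 q3 =>
        cases q3 with
        | nil => exact ⟨_, _, h, h2, hh3⟩
        | cons h4 q4 => simp [SimpleGraph.Walk.length_cons] at hl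



lemma concat_isPath {H : SimpleGraph V} {y t s : V} {p : H.Walk y t}
    (hp : p.IsPath) (hs : s ∉ p.support) (h : H.Adj t s) : (p.concat h).IsPath := by
  rw [SimpleGraph.Walk.isPath_def, SimpleGraph.Walk.support_concat]
  simp only [List.concat_eq_append, List.nodup_append, List.nodup_cons, List.nodup_nil]
  exact ⟨(SimpleGraph.Walk.isPath_def p).mp hp, ⟨by simp, by simp⟩, by
    intro z hz; simp; rintro rfl; exact hs hz⟩

lemma two_cycles_contradiction {H : SimpleGraph V}
    (hodd : ∀ (u : V) (w : H.Walk u u), w.IsCycle → Odd w.length → w.length ≤ 3)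
    {y t s a : V} (p : H.Walk y t) (hp : p.IsPath) (ha : a ∉ p.support)
    (hs : s ∉ p.support) (h_ay : H.Adj a y) (h_ta : H.Adj t a) (h_ts : H.Adj t s)
    (h_sa : H.Adj s a) (hyt : y ≠ t) (hys : y ≠ s) (hlen : 2 ≤ p.length) : False := by
  have hC1 := cons_concat_isCycle p hp ha h_ay h_ta hyt
  have hp3 : (p.concat h_ts).IsPath := concat_isPath hp hs h_ts
  have ha3 : a ∉ (p.concat h_ts).support := by
    rw [SimpleGraph.Walk.support_concat]
    simp only [List.concat_eq_append, List.mem_append, List.mem_singleton]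
    rintro (h | rfl)
    · exact ha h
    · exact h_sa.ne rfl
  have hC2 := cons_concat_isCycle (p.concat h_ts) hp3 ha3 h_ay h_sa hys
  have hl1 : (SimpleGraph.Walk.cons h_ay (p.concat h_ta)).length = p.length + 2 := by
    simp [SimpleGraph.Walk.concat]
  have hl2 : (SimpleGraph.Walk.cons h_ay ((p.concat h_ts).concat h_sa)).length
      = p.length + 3 := by
    simp [SimpleGraph.Walk.concat]
  rcases Nat.even_or_odd p.length with he | ho
  · have := hodd a _ hC2 (by rw [hl2]; rcases he with ⟨k, hk⟩; exact ⟨k + 1, by omega⟩)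
    omega
  · have := hodd a _ hC1 (by rw [hl1]; rcases ho with ⟨k, hk⟩; exact ⟨k + 1, by omega⟩)
    omega

lemma L1 [DecidableEq V] {H : SimpleGraph V}
    (h2conn : ∀ v : V, (H.induce {u | u ≠ v}).Connected)
    (hodd : ∀ (u : V) (w : H.Walk u u), w.IsCycle → Odd w.length → w.length ≤ 3)
    {a b c y : V} (hab : H.Adj a b) (hac : H.Adj a c) (hbc : H.Adj b c)
    (hay : H.Adj a y) (hyb : y ≠ b) (hyc : y ≠ c) : H.Adj y b ∨ H.Adj y c := by
  have hya : y ≠ a := hay.ne'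
  obtain ⟨w0⟩ := (h2conn a).preconnected ⟨y, hya⟩ ⟨b, hab.ne'⟩
  obtain ⟨w1, ha1⟩ : ∃ w : H.Walk y b, a ∉ w.support := by
    refine ⟨w0.map (SimpleGraph.Embedding.induce {u : V | u ≠ a}).toHom, ?_⟩
    change a ∉ (w0.map (SimpleGraph.Embedding.induce {u : V | u ≠ a}).toHom).support
    rw [SimpleGraph.Walk.support_map]
    intro hmem
    obtain ⟨u', hu', hval⟩ := List.mem_map.mp hmem
    exact u'.prop hval
  have hp : w1.bypass.IsPath := w1.bypass_isPath
  have hap : a ∉ w1.bypass.support := fun h => ha1 (w1.support_bypass_subset h)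
  by_cases hcp : c ∈ w1.bypass.support
  · set p := w1.bypass with hpdef
    have hp2 : (p.takeUntil c hcp).IsPath := hp.takeUntil hcp
    have hap2 : a ∉ (p.takeUntil c hcp).support :=
      fun h => hap (p.support_takeUntil_subset hcp h)
    have hbp2 : b ∉ (p.takeUntil c hcp).support := by
      intro hb
      have hnd := (SimpleGraph.Walk.isPath_def p).mp hp
      conv at hnd => rw [← p.take_spec hcp]
      rw [SimpleGraph.Walk.support_append] at hnd
      have hdrop : b ∈ (p.dropUntil c hcp).support := SimpleGraph.Walk.end_mem_support _
      rw [SimpleGraph.Walk.support_eq_cons] at hdrop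
      rcases List.mem_cons.mp hdrop with heq | htl
      · exact hbc.ne heq
      · exact (List.nodup_append'.mp hnd).2.2 hb htl
    have hlen0 : (p.takeUntil c hcp).length ≠ 0 :=
      fun h0 => hyc (SimpleGraph.Walk.eq_of_length_eq_zero h0)
    rcases Nat.lt_or_ge (p.takeUntil c hcp).length 2 with hl | hl
    · right
      exact SimpleGraph.Walk.adj_of_length_eq_one (p := p.takeUntil c hcp) (by omega)
    · exact absurd (two_cycles_contradiction hodd _ hp2 hap2 hbp2 hay hac.symm hbc.symm
        hab.symm hyc hyb hl) (by simp)
  · set p := w1.bypass with hpdef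
    have hlen0 : p.length ≠ 0 := fun h0 => hyb (SimpleGraph.Walk.eq_of_length_eq_zero h0)
    rcases Nat.lt_or_ge p.length 2 with hl | hl
    · left
      exact SimpleGraph.Walk.adj_of_length_eq_one (p := p) (by omega)
    · exact absurd (two_cycles_contradiction hodd p hp hap hcp hay hab.symm hbc
        hac.symm hyb hyc hl) (by simp)


lemma connected_of_h2conn [Fintype V] [DecidableEq V] {H : SimpleGraph V}
    (hcard : 3 ≤ Fintype.card V)
    (h2conn : ∀ v : V, (H.induce {u | u ≠ v}).Connected) : H.Connected := by
  have hne : Nonempty V := Fintype.card_pos_iff.mp (by omega)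
  rw [connected_iff]
  refine ⟨fun x y => ?_, hne⟩
  by_cases hxy : x = y
  · subst hxy; rfl
  obtain ⟨z, hz⟩ : ∃ z, z ∉ ({x, y} : Finset V) := by
    by_contra hc
    push_neg at hc
    have : (Finset.univ : Finset V) ⊆ {x, y} := fun t _ => hc t
    have := Finset.card_le_card this
    have h2 : ({x, y} : Finset V).card ≤ 2 := Finset.card_insert_le _ _ |>.trans (by simp)
    rw [Finset.card_univ] at this
    omega
  simp only [Finset.mem_insert, Finset.mem_singleton, not_or] at hz
  have r := (h2conn z).preconnected ⟨x, fun h => hz.1 h.symm⟩ ⟨y, fun h => hz.2 h.symm⟩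
  exact r.map (SimpleGraph.Embedding.induce {u : V | u ≠ z}).toHom

lemma exists_triangle [Fintype V] [DecidableEq V] {H : SimpleGraph V}
    (hconn : H.Connected)
    (hodd : ∀ (u : V) (w : H.Walk u u), w.IsCycle → Odd w.length → w.length ≤ 3)
    (hbip : ¬∃ f : V → Bool, ∀ a b, H.Adj a b → f a ≠ f b) :
    ∃ a b c : V, H.Adj a b ∧ H.Adj a c ∧ H.Adj b c := by
  have hne : Nonempty V := hconn.nonempty
  obtain ⟨v₀⟩ := hne
  push_neg at hbip
  obtain ⟨x, y, hadj, hpar⟩ := hbip (fun u => decide (Odd (H.dist v₀ u)))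
  rw [decide_eq_decide] at hpar
  -- build an odd closed walk
  obtain ⟨px, hpx⟩ := (hconn.preconnected v₀ x).exists_walk_length_eq_dist
  obtain ⟨py, hpy⟩ := (hconn.preconnected v₀ y).exists_walk_length_eq_dist
  have hoddlen : Odd ((px.reverse.append (py.append
      (SimpleGraph.Walk.cons hadj.symm SimpleGraph.Walk.nil))).length) := by
    rw [SimpleGraph.Walk.length_append, SimpleGraph.Walk.length_append,
      SimpleGraph.Walk.length_reverse, SimpleGraph.Walk.length_cons,
      SimpleGraph.Walk.length_nil, hpx, hpy]
    rcases Nat.even_or_odd (H.dist v₀ x) with he | ho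
    · have h2 : Even (H.dist v₀ y) := by
        rw [← Nat.not_odd_iff_even] at he ⊢
        intro hcon; exact he (hpar.mpr hcon)
      rcases he with ⟨k, hk⟩; rcases h2 with ⟨m, hm⟩
      exact ⟨k + m, by omega⟩
    · have h2 : Odd (H.dist v₀ y) := hpar.mp ho
      rcases ho with ⟨k, hk⟩; rcases h2 with ⟨m, hm⟩
      exact ⟨k + m + 1, by omega⟩
  obtain ⟨z, c, hcyc, hoddc⟩ := odd_closed_walk_to_cycle (H := H) _ _ le_rfl hoddlen
  have h3le := hcyc.three_le_length
  have h3 : c.length = 3 := by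
    have := hodd z c hcyc hoddc
    omega
  obtain ⟨p, q, h1, h2, h3'⟩ := cycle3_exists c h3
  exact ⟨z, p, q, h1, h3'.symm, h2⟩



lemma konig_half [Fintype V] [DecidableEq V] {H : SimpleGraph V} {f : V → Bool}
    (hf : ∀ a b, H.Adj a b → f a ≠ f b) {Q : Finset V}
    (hQ : IsVertexCoverSet H Q)
    (hmin : ∀ Q', IsVertexCoverSet H Q' → Q.card ≤ Q'.card) (bb : Bool) :
    ∃ g : {x : V // x ∈ Q.filter (fun z => f z = bb)} → V, Function.Injective g ∧
      ∀ x, H.Adj x.val (g x) ∧ g x ∉ Q := by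
  classical
  set A := Q.filter (fun z => f z = bb) with hA
  set t : {x : V // x ∈ A} → Finset V :=
    (fun x => (H.neighborFinset x.val).filter (fun z => z ∉ Q)) with ht
  have hall : ∀ s : Finset {x : V // x ∈ A}, s.card ≤ (s.biUnion t).card := by
    intro s
    by_contra hcon
    push_neg at hcon
    set X := s.image Subtype.val with hX
    have hXcard : X.card = s.card := Finset.card_image_of_injective _ Subtype.val_injective
    have hXsub : X ⊆ Q := by
      intro x hx
      obtain ⟨x', -, rfl⟩ := Finset.mem_image.mp hx
      exact Finset.mem_of_mem_filter _ x'.prop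
    set N := s.biUnion t with hN
    have hcover : IsVertexCoverSet H ((Q \ X) ∪ N) := by
      have aux : ∀ a b : V, H.Adj a b → a ∈ Q → ∃ x ∈ s(a, b), x ∈ (Q \ X) ∪ N := by
        intro a b hadj haQ
        by_cases haX : a ∈ X
        · obtain ⟨a', ha's, ha'v⟩ := Finset.mem_image.mp haX
          by_cases hbQ : b ∈ Q
          · by_cases hbX : b ∈ X
            · exfalso
              obtain ⟨b', -, hb'v⟩ := Finset.mem_image.mp hbX
              have hfa : f a = bb := by
                rw [← ha'v]; exact (Finset.mem_filter.mp a'.prop).2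
              have hfb : f b = bb := by
                rw [← hb'v]; exact (Finset.mem_filter.mp b'.prop).2
              exact hf a b hadj (hfa.trans hfb.symm)
            · exact ⟨b, Sym2.mem_mk_right a b, Finset.mem_union_left _
                (Finset.mem_sdiff.mpr ⟨hbQ, hbX⟩)⟩
          · refine ⟨b, Sym2.mem_mk_right a b, Finset.mem_union_right _ ?_⟩
            refine Finset.mem_biUnion.mpr ⟨a', ha's, ?_⟩
            rw [ht]
            simp only [Finset.mem_filter, SimpleGraph.mem_neighborFinset, ha'v]
            exact ⟨hadj, hbQ⟩
        · exact ⟨a, Sym2.mem_mk_left a b, Finset.mem_union_left _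
            (Finset.mem_sdiff.mpr ⟨haQ, haX⟩)⟩
      intro e he
      induction e with
      | _ a b =>
        have hadj : H.Adj a b := (SimpleGraph.mem_edgeSet H).mp he
        obtain ⟨x0, hx0e, hx0Q⟩ := hQ _ he
        rcases Sym2.mem_iff.mp hx0e with rfl | rfl
        · exact aux _ _ hadj hx0Q
        · obtain ⟨z, hz1, hz2⟩ := aux _ _ hadj.symm hx0Q
          rw [Sym2.eq_swap]
          exact ⟨z, hz1, hz2⟩
    have hcard : ((Q \ X) ∪ N).card < Q.card := by
      have h1 : ((Q \ X) ∪ N).card ≤ (Q \ X).card + N.card := Finset.card_union_le _ _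
      have h2 : (Q \ X).card = Q.card - X.card := Finset.card_sdiff_of_subset hXsub
      have h3 : X.card ≤ Q.card := Finset.card_le_card hXsub
      omega
    exact absurd (hmin _ hcover) (by omega)
  obtain ⟨g, hginj, hgt⟩ := (Finset.all_card_le_biUnion_card_iff_existsInjective' t).mp hall
  refine ⟨g, hginj, fun x => ?_⟩
  have := hgt x
  rw [ht] at this
  simp only [Finset.mem_filter, SimpleGraph.mem_neighborFinset] at this
  exact this



lemma konig [Fintype V] [DecidableEq V] {H : SimpleGraph V} {f : V → Bool}
    (hf : ∀ a b, H.Adj a b → f a ≠ f b) :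
    ∃ (M : Finset (Sym2 V)) (Q : Finset V),
      IsMatchingSet H M ∧ IsVertexCoverSet H Q ∧ Q.card ≤ M.card := by
  classical
  obtain ⟨Q, hQmem, hQmin'⟩ := Finset.exists_min_image
    (Finset.univ.filter fun Q : Finset V => IsVertexCoverSet H Q) Finset.card
    ⟨Finset.univ, by
      simp only [Finset.mem_filter, Finset.mem_univ, true_and]
      intro e he
      exact ⟨e.out.1, Sym2.out_fst_mem e, Finset.mem_univ _⟩⟩
  have hQ : IsVertexCoverSet H Q := (Finset.mem_filter.mp hQmem).2
  have hmin : ∀ Q', IsVertexCoverSet H Q' → Q.card ≤ Q'.card := fun Q' h =>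
    hQmin' Q' (Finset.mem_filter.mpr ⟨Finset.mem_univ _, h⟩)
  obtain ⟨gA, hgAinj, hgA⟩ := konig_half hf hQ hmin false
  obtain ⟨gB, hgBinj, hgB⟩ := konig_half hf hQ hmin true
  have hAQ : ∀ x : {z : V // z ∈ Q.filter (fun z => f z = false)},
      x.val ∈ Q ∧ f x.val = false := fun x =>
    ⟨Finset.mem_of_mem_filter _ x.prop, (Finset.mem_filter.mp x.prop).2⟩
  have hBQ : ∀ x : {z : V // z ∈ Q.filter (fun z => f z = true)},
      x.val ∈ Q ∧ f x.val = true := fun x =>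
    ⟨Finset.mem_of_mem_filter _ x.prop, (Finset.mem_filter.mp x.prop).2⟩
  have hgAf : ∀ x, f (gA x) = true := by
    intro x
    have h2 := hf _ _ (hgA x).1
    rw [(hAQ x).2] at h2
    cases h : f (gA x)
    · exact absurd h.symm h2
    · rfl
  have hgBf : ∀ x, f (gB x) = false := by
    intro x
    have h2 := hf _ _ (hgB x).1
    rw [(hBQ x).2] at h2
    cases h : f (gB x)
    · rfl
    · exact absurd h.symm h2
  obtain ⟨MA, hMA⟩ : ∃ m : Finset (Sym2 V),
      m = (Q.filter (fun z => f z = false)).attach.image (fun x => s(x.val, gA x)) :=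
    ⟨_, rfl⟩
  obtain ⟨MB, hMB⟩ : ∃ m : Finset (Sym2 V),
      m = (Q.filter (fun z => f z = true)).attach.image (fun x => s(x.val, gB x)) :=
    ⟨_, rfl⟩
  have hformA : ∀ e ∈ MA, ∃ x, e = s(x.val, gA x) := by
    intro e he
    rw [hMA] at he
    obtain ⟨x, -, rfl⟩ := Finset.mem_image.mp he
    exact ⟨x, rfl⟩
  have hformB : ∀ e ∈ MB, ∃ x, e = s(x.val, gB x) := by
    intro e he
    rw [hMB] at he
    obtain ⟨x, -, rfl⟩ := Finset.mem_image.mp he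
    exact ⟨x, rfl⟩
  refine ⟨MA ∪ MB, Q, ⟨?_, ?_⟩, hQ, ?_⟩
  · intro e he
    rcases Finset.mem_union.mp he with he | he
    · obtain ⟨x, rfl⟩ := hformA e he
      exact (H.mem_edgeSet).mpr (hgA x).1
    · obtain ⟨x, rfl⟩ := hformB e he
      exact (H.mem_edgeSet).mpr (hgB x).1
  · intro e he e' he' hne z hze hze'
    simp only [Finset.coe_union, Set.mem_union, Finset.mem_coe] at he he'
    rcases he with he | he <;> rcases he' with he' | he'
    · obtain ⟨x, rfl⟩ := hformA _ he
      obtain ⟨x', rfl⟩ := hformA _ he'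
      rcases Sym2.mem_iff.mp hze with rfl | rfl <;> rcases Sym2.mem_iff.mp hze' with h | h
      · exact hne (congrArg (fun y => s(y.val, gA y)) (Subtype.ext h))
      · exact (hgA x').2 (h ▸ (hAQ x).1)
      · exact (hgA x).2 (h.symm ▸ (hAQ x').1)
      · exact hne (congrArg (fun y => s(y.val, gA y)) (hgAinj h))
    · obtain ⟨x, rfl⟩ := hformA _ he
      obtain ⟨x', rfl⟩ := hformB _ he'
      rcases Sym2.mem_iff.mp hze with rfl | rfl <;> rcases Sym2.mem_iff.mp hze' with h | h
      · exact absurd ((hAQ x).2.symm.trans (h ▸ (hBQ x').2)) (by simp)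
      · exact (hgB x').2 (h ▸ (hAQ x).1)
      · exact (hgA x).2 (h.symm ▸ (hBQ x').1)
      · exact absurd ((hgAf x).symm.trans (h ▸ (hgBf x'))) (by simp)
    · obtain ⟨x, rfl⟩ := hformB _ he
      obtain ⟨x', rfl⟩ := hformA _ he'
      rcases Sym2.mem_iff.mp hze with rfl | rfl <;> rcases Sym2.mem_iff.mp hze' with h | h
      · exact absurd ((hBQ x).2.symm.trans (h ▸ (hAQ x').2)) (by simp)
      · exact (hgA x').2 (h ▸ (hBQ x).1)
      · exact (hgB x).2 (h.symm ▸ (hAQ x').1)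
      · exact absurd ((hgBf x).symm.trans (h ▸ (hgAf x'))) (by simp)
    · obtain ⟨x, rfl⟩ := hformB _ he
      obtain ⟨x', rfl⟩ := hformB _ he'
      rcases Sym2.mem_iff.mp hze with rfl | rfl <;> rcases Sym2.mem_iff.mp hze' with h | h
      · exact hne (congrArg (fun y => s(y.val, gB y)) (Subtype.ext h))
      · exact (hgB x').2 (h ▸ (hBQ x).1)
      · exact (hgB x).2 (h.symm ▸ (hBQ x').1)
      · exact hne (congrArg (fun y => s(y.val, gB y)) (hgBinj h))
  · have hinjA : Function.Injective
        (fun x : {z : V // z ∈ Q.filter (fun z => f z = false)} => s(x.val, gA x)) := by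
      intro x x' h
      rcases Sym2.eq_iff.mp h with ⟨h1, -⟩ | ⟨h1, h2⟩
      · exact Subtype.ext h1
      · exact absurd (h2.symm ▸ (hAQ x').1) (hgA x).2
    have hinjB : Function.Injective
        (fun x : {z : V // z ∈ Q.filter (fun z => f z = true)} => s(x.val, gB x)) := by
      intro x x' h
      rcases Sym2.eq_iff.mp h with ⟨h1, -⟩ | ⟨h1, h2⟩
      · exact Subtype.ext h1
      · exact absurd (h2.symm ▸ (hBQ x').1) (hgB x).2
    have hcardA : MA.card = (Q.filter (fun z => f z = false)).card := by
      rw [hMA, Finset.card_image_of_injective _ hinjA, Finset.card_attach]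
    have hcardB : MB.card = (Q.filter (fun z => f z = true)).card := by
      rw [hMB, Finset.card_image_of_injective _ hinjB, Finset.card_attach]
    have hdisj : Disjoint MA MB := by
      rw [Finset.disjoint_left]
      intro e heA heB
      obtain ⟨x, rfl⟩ := hformA _ heA
      obtain ⟨x', heq⟩ := hformB _ heB
      rcases Sym2.eq_iff.mp heq with ⟨h1, -⟩ | ⟨h1, h2⟩
      · exact absurd ((hAQ x).2.symm.trans (h1 ▸ (hBQ x').2)) (by simp)
      · exact absurd (h1 ▸ (hAQ x).1) (hgB x').2
    have hQsplit : (Q.filter (fun z => f z = false)).card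
        + (Q.filter (fun z => f z = true)).card = Q.card := by
      have heq : Q.filter (fun z => f z = true) = Q.filter (fun z => ¬ f z = false) := by
        apply Finset.filter_congr
        intro x _
        simp
      rw [heq]
      exact Finset.card_filter_add_card_filter_not _
    rw [Finset.card_union_of_disjoint hdisj, hcardA, hcardB]
    omega


lemma matching_le_cover [DecidableEq V] {H : SimpleGraph V} {M : Finset (Sym2 V)}
    {Q : Finset V} (hM : IsMatchingSet H M) (hQ : IsVertexCoverSet H Q) :
    M.card ≤ Q.card := by
  classical
  have hsel : ∀ e ∈ M, ∃ x, x ∈ e ∧ x ∈ Q := by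
    intro e he
    obtain ⟨x, hx1, hx2⟩ := hQ e (hM.1 he)
    exact ⟨x, hx1, hx2⟩
  have hphi : ∀ e ∈ M, ((fun e => if h : ∃ x, x ∈ e ∧ x ∈ Q then Classical.choose h
      else e.out.1) e) ∈ e ∧ ((fun e => if h : ∃ x, x ∈ e ∧ x ∈ Q then Classical.choose h
      else e.out.1) e) ∈ Q := by
    intro e he
    have h := hsel e he
    simp only [h, dif_pos]
    exact ⟨(Classical.choose_spec h).1, (Classical.choose_spec h).2⟩
  apply Finset.card_le_card_of_injOn
    (fun e => if h : ∃ x, x ∈ e ∧ x ∈ Q then Classical.choose h else e.out.1)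
  · intro e he
    exact (hphi e he).2
  · intro e he e' he' heq
    by_contra hne
    have h1 := (hphi e he).1
    have h2 := (hphi e' he').1
    rw [heq] at h1
    exact hM.2 he he' hne _ h1 h2

lemma empty_matching [DecidableEq V] (H : SimpleGraph V) : IsMatchingSet H ∅ :=
  ⟨by simp, by simp⟩

lemma cover_of_cover_deleteEdges {H : SimpleGraph V} {Q : Finset V}
    (hQ : IsVertexCoverSet H Q) (s : Set (Sym2 V)) :
    IsVertexCoverSet (H.deleteEdges s) Q := by
  intro e he
  rw [SimpleGraph.edgeSet_deleteEdges] at he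
  exact hQ e he.1

lemma bipartite_case [Fintype V] [DecidableEq V] {H : SimpleGraph V} {f : V → Bool}
    (hf : ∀ a b, H.Adj a b → f a ≠ f b) (v : V) :
    ∃ (M : Finset (Sym2 V)) (Q : Finset V),
      IsMatchingSet H M ∧ Q.card ≤ M.card ∧ IsVertexCoverSet (H.deleteEdges ↑M) Q ∧
        (v ∈ Q ∨ ∀ e ∈ M, v ∉ e) := by
  classical
  obtain ⟨Mmax, hMmax_mem, hMmax'⟩ := Finset.exists_max_image
    (Finset.univ.filter fun M : Finset (Sym2 V) => IsMatchingSet H M) Finset.card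
    ⟨∅, by simp [empty_matching]⟩
  have hMmaxM : IsMatchingSet H Mmax := (Finset.mem_filter.mp hMmax_mem).2
  have hMmax : ∀ M', IsMatchingSet H M' → M'.card ≤ Mmax.card := fun M' h =>
    hMmax' M' (Finset.mem_filter.mpr ⟨Finset.mem_univ _, h⟩)
  obtain ⟨MK, QK, hMK, hQK, hle⟩ := konig hf
  have hKle : QK.card ≤ Mmax.card := hle.trans (hMmax _ hMK)
  by_cases hm : ∃ M', IsMatchingSet H M' ∧ Mmax.card ≤ M'.card ∧ ∀ e ∈ M', v ∉ e
  · obtain ⟨M', hM'1, hM'2, hM'3⟩ := hm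
    exact ⟨M', QK, hM'1, hKle.trans hM'2, cover_of_cover_deleteEdges hQK _,
      Or.inr hM'3⟩
  · push_neg at hm
    have hf' : ∀ a b, (H.deleteEdges {e : Sym2 V | v ∈ e}).Adj a b → f a ≠ f b :=
      fun a b h => hf a b ((SimpleGraph.deleteEdges_adj.mp h).1)
    obtain ⟨M', Q'', hM', hQ'', hle'⟩ := konig hf'
    have hM'H : IsMatchingSet H M' := by
      refine ⟨fun e he => ?_, hM'.2⟩
      have := hM'.1 he
      rw [SimpleGraph.edgeSet_deleteEdges] at this
      exact this.1
    have hM'v : ∀ e ∈ M', v ∉ e := by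
      intro e he
      have := hM'.1 he
      rw [SimpleGraph.edgeSet_deleteEdges] at this
      exact this.2
    have hlt : M'.card < Mmax.card := by
      rcases Nat.lt_or_ge M'.card Mmax.card with h | h
      · exact h
      · obtain ⟨e, he, hv⟩ := hm M' hM'H h
        exact absurd (hM'v e he) (by simp [hv])
    refine ⟨Mmax, insert v Q'', hMmaxM, ?_, ?_, Or.inl (Finset.mem_insert_self _ _)⟩
    · have := Finset.card_insert_le v Q''
      omega
    · apply cover_of_cover_deleteEdges
      intro e he
      by_cases hv : v ∈ e
      · exact ⟨v, hv, Finset.mem_insert_self _ _⟩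
      · have he' : e ∈ (H.deleteEdges {e : Sym2 V | v ∈ e}).edgeSet := by
          rw [SimpleGraph.edgeSet_deleteEdges]
          exact ⟨he, hv⟩
        obtain ⟨x, hx1, hx2⟩ := hQ'' e he'
        exact ⟨x, hx1, Finset.mem_insert_of_mem hx2⟩



lemma sym2_ne {u p w q : V} (h1 : u ≠ w) (h2 : u ≠ q) : s(u, p) ≠ s(w, q) := by
  intro h
  rcases Sym2.eq_iff.mp h with ⟨rfl, rfl⟩ | ⟨rfl, rfl⟩
  · exact h1 rfl
  · exact h2 rfl

lemma matching1 [DecidableEq V] {H : SimpleGraph V} {u p : V} (h : H.Adj u p) :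
    IsMatchingSet H {s(u, p)} := by
  constructor
  · intro e he
    simp only [Finset.coe_singleton, Set.mem_singleton_iff] at he
    subst he
    exact (H.mem_edgeSet).mpr h
  · intro e he f hf hne
    simp only [Finset.coe_singleton, Set.mem_singleton_iff] at he hf
    exact absurd (he.trans hf.symm) hne

lemma matching2 [DecidableEq V] {H : SimpleGraph V} {u p w q : V}
    (h1 : H.Adj u p) (h2 : H.Adj w q) (huw : u ≠ w) (huq : u ≠ q)
    (hpw : p ≠ w) (hpq : p ≠ q) : IsMatchingSet H {s(u, p), s(w, q)} := by
  constructor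
  · intro e he
    simp only [Finset.coe_insert, Set.mem_insert_iff, Finset.coe_singleton,
      Set.mem_singleton_iff] at he
    rcases he with rfl | rfl
    · exact (H.mem_edgeSet).mpr h1
    · exact (H.mem_edgeSet).mpr h2
  · intro e he f hf hne x hxe hxf
    simp only [Finset.coe_insert, Set.mem_insert_iff, Finset.coe_singleton,
      Set.mem_singleton_iff] at he hf
    rcases he with rfl | rfl <;> rcases hf with rfl | rfl
    · exact hne rfl
    · rcases Sym2.mem_iff.mp hxe with rfl | rfl <;>
        rcases Sym2.mem_iff.mp hxf with h | h
      · exact huw h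
      · exact huq h
      · exact hpw h
      · exact hpq h
    · rcases Sym2.mem_iff.mp hxe with rfl | rfl <;>
        rcases Sym2.mem_iff.mp hxf with h | h
      · exact huw h.symm
      · exact hpw h.symm
      · exact huq h.symm
      · exact hpq h.symm
    · exact hne rfl

lemma cover_helper [DecidableEq V] {H : SimpleGraph V} {M : Finset (Sym2 V)}
    {Q : Finset V}
    (h : ∀ a b, H.Adj a b → s(a, b) ∉ M → (a ∈ Q ∨ b ∈ Q)) :
    IsVertexCoverSet (H.deleteEdges ↑M) Q := by
  intro e he
  rw [SimpleGraph.edgeSet_deleteEdges] at he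
  induction e with
  | _ a b =>
    have hadj : H.Adj a b := (H.mem_edgeSet).mp he.1
    have hnm : s(a, b) ∉ M := fun hc => he.2 hc
    rcases h a b hadj hnm with hq | hq
    · exact ⟨a, Sym2.mem_mk_left a b, hq⟩
    · exact ⟨b, Sym2.mem_mk_right a b, hq⟩


lemma book_case [Fintype V] [DecidableEq V] {H : SimpleGraph V}
    (hodd : ∀ (u : V) (w : H.Walk u u), w.IsCycle → Odd w.length → w.length ≤ 3)
    {u w c0 y0 : V}
    (huw : H.Adj u w) (huc : H.Adj u c0) (hwc : H.Adj w c0)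
    (hy0u : H.Adj y0 u) (hy0w : H.Adj y0 w)
    (hy0nu : y0 ≠ u) (hy0nw : y0 ≠ w) (hy0nc : y0 ≠ c0)
    (hpair : ∀ y, y ≠ u → y ≠ w → y ≠ c0 →
      ((H.Adj y u ∧ H.Adj y w) ∨ (H.Adj y u ∧ H.Adj y c0) ∨ (H.Adj y w ∧ H.Adj y c0)))
    (hnoK4 : ∀ y, y ≠ u → y ≠ w → y ≠ c0 → ¬(H.Adj y u ∧ H.Adj y w ∧ H.Adj y c0))
    (v : V) :
    ∃ (M : Finset (Sym2 V)) (Q : Finset V),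
      IsMatchingSet H M ∧ Q.card ≤ M.card ∧ IsVertexCoverSet (H.deleteEdges ↑M) Q ∧
        (v ∈ Q ∨ ∀ e ∈ M, v ∉ e) := by
  classical
  have hspine : ∀ z, z ≠ u → z ≠ w → H.Adj z u ∧ H.Adj z w := by
    intro z hzu hzw
    by_cases hzc : z = c0
    · subst hzc; exact ⟨huc.symm, hwc.symm⟩
    by_cases hzy : z = y0
    · subst hzy; exact ⟨hy0u, hy0w⟩
    rcases hpair z hzu hzw hzc with hP | ⟨h1, h2⟩ | ⟨h1, h2⟩
    · exact hP
    · exact (no5 hodd hy0u h1.symm h2 hwc.symm hy0w.symm (Ne.symm hzy) hy0nc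
        huc.ne huw.ne hzw).elim
    · exact (no5 hodd hy0w h1.symm h2 huc.symm hy0u.symm (Ne.symm hzy) hy0nc
        hwc.ne huw.ne' hzu).elim
  have hy0c : ¬ H.Adj y0 c0 := fun hcon => hnoK4 y0 hy0nu hy0nw hy0nc ⟨hy0u, hy0w, hcon⟩
  have hcu : c0 ≠ u := huc.ne'
  have hcw : c0 ≠ w := hwc.ne'
  have huwne : u ≠ w := huw.ne
  by_cases h5 : ∃ z, z ≠ u ∧ z ≠ w ∧ z ≠ c0 ∧ z ≠ y0
  · obtain ⟨z5, hz5u, hz5w, hz5c, hz5y⟩ := h5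
    have hz5s := hspine z5 hz5u hz5w
    -- three distinct pages: c0, y0, z5
    -- pages are pairwise non-adjacent
    have hindep : ∀ z1 z2, z1 ≠ u → z1 ≠ w → z2 ≠ u → z2 ≠ w → z1 ≠ z2 →
        ¬H.Adj z1 z2 := by
      intro z1 z2 h1u h1w h2u h2w h12 hadj
      -- find a third page p3 ∉ {z1, z2}
      obtain ⟨p3, hp3u, hp3w, hp31, hp32⟩ :
          ∃ p3, p3 ≠ u ∧ p3 ≠ w ∧ p3 ≠ z1 ∧ p3 ≠ z2 := by
        by_cases hc1 : c0 ≠ z1 ∧ c0 ≠ z2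
        · exact ⟨c0, hcu, hcw, hc1.1, hc1.2⟩
        by_cases hc2 : y0 ≠ z1 ∧ y0 ≠ z2
        · exact ⟨y0, hy0nu, hy0nw, hc2.1, hc2.2⟩
        rw [not_and_or, not_ne_iff, not_ne_iff] at hc1 hc2
        rcases hc1 with rfl | rfl <;> rcases hc2 with rfl | rfl
        · exact absurd rfl (Ne.symm hy0nc)
        · exact ⟨z5, hz5u, hz5w, Ne.symm (Ne.symm hz5c), hz5y⟩
        · exact ⟨z5, hz5u, hz5w, hz5y, hz5c⟩
        · exact absurd rfl (Ne.symm hy0nc)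
      have hp3s := hspine p3 hp3u hp3w
      have h1s := hspine z1 h1u h1w
      have h2s := hspine z2 h2u h2w
      exact no5 hodd hadj h2s.2 hp3s.2.symm hp3s.1 h1s.1.symm h1w (Ne.symm hp31)
        (Ne.symm hp32) h2u huw.ne'
    by_cases hv : v = u ∨ v = w
    · refine ⟨{s(u, c0), s(w, y0)}, {u, w}, matching2 huc hy0w.symm huwne
        (Ne.symm hy0nu) hcw (Ne.symm hy0nc), ?_, ?_, Or.inl (by
          rcases hv with rfl | rfl <;> simp)⟩
      · rw [Finset.card_pair (sym2_ne huwne (Ne.symm hy0nu)),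
          Finset.card_pair huwne]
      · apply cover_helper
        intro x y hxy _
        by_contra hcon
        push_neg at hcon
        simp only [Finset.mem_insert, Finset.mem_singleton, not_or] at hcon
        exact hindep x y hcon.1.1 hcon.1.2 hcon.2.1 hcon.2.2 hxy.ne hxy
    · push_neg at hv
      obtain ⟨p1, p2, h1u, h1w, h2u, h2w, h12, h1v, h2v⟩ :
          ∃ p1 p2, p1 ≠ u ∧ p1 ≠ w ∧ p2 ≠ u ∧ p2 ≠ w ∧ p1 ≠ p2 ∧ p1 ≠ v ∧ p2 ≠ v := by
        by_cases hvc : v = c0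
        · subst hvc
          exact ⟨y0, z5, hy0nu, hy0nw, hz5u, hz5w, Ne.symm hz5y, hy0nc, hz5c⟩
        by_cases hvy : v = y0
        · subst hvy
          exact ⟨c0, z5, hcu, hcw, hz5u, hz5w, Ne.symm hz5c, Ne.symm hy0nc, hz5y⟩
        · exact ⟨c0, y0, hcu, hcw, hy0nu, hy0nw, Ne.symm hy0nc,
            fun h => hvc h.symm, fun h => hvy h.symm⟩
      have h1s := hspine p1 h1u h1w
      have h2s := hspine p2 h2u h2w
      refine ⟨{s(u, p1), s(w, p2)}, {u, w}, matching2 h1s.1.symm h2s.2.symm huwne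
        (Ne.symm h2u) h1w h12, ?_, ?_, Or.inr ?_⟩
      · rw [Finset.card_pair (sym2_ne huwne (Ne.symm h2u)), Finset.card_pair huwne]
      · apply cover_helper
        intro x y hxy _
        by_contra hcon
        push_neg at hcon
        simp only [Finset.mem_insert, Finset.mem_singleton, not_or] at hcon
        exact hindep x y hcon.1.1 hcon.1.2 hcon.2.1 hcon.2.2 hxy.ne hxy
      · intro e he
        simp only [Finset.mem_insert, Finset.mem_singleton] at he
        rcases he with rfl | rfl <;> rw [Sym2.mem_iff] <;> push_neg
        · exact ⟨hv.1, Ne.symm h1v⟩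
        · exact ⟨hv.2, Ne.symm h2v⟩
  · -- exactly four vertices
    push_neg at h5
    have hall : ∀ z : V, z = u ∨ z = w ∨ z = c0 ∨ z = y0 := by
      intro z
      by_cases h1 : z = u; · exact Or.inl h1
      by_cases h2 : z = w; · exact Or.inr (Or.inl h2)
      by_cases h3 : z = c0; · exact Or.inr (Or.inr (Or.inl h3))
      exact Or.inr (Or.inr (Or.inr (h5 z h1 h2 h3)))
    rcases hall v with hveq | hveq | hveq | hveq
    · -- v = u
      refine ⟨{s(u, c0), s(w, y0)}, {u, w}, matching2 huc hy0w.symm huwne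
        (Ne.symm hy0nu) hcw (Ne.symm hy0nc), ?_, ?_, Or.inl (by simp [hveq])⟩
      · rw [Finset.card_pair (sym2_ne huwne (Ne.symm hy0nu)), Finset.card_pair huwne]
      · apply cover_helper
        intro x y hxy _
        by_contra hcon
        push_neg at hcon
        simp only [Finset.mem_insert, Finset.mem_singleton, not_or] at hcon
        rcases hall x with rfl | rfl | rfl | rfl
        · exact hcon.1.1 rfl
        · exact hcon.1.2 rfl
        · rcases hall y with rfl | rfl | rfl | rfl
          · exact hcon.2.1 rfl
          · exact hcon.2.2 rfl
          · exact hxy.ne rfl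
          · exact hy0c hxy.symm
        · rcases hall y with rfl | rfl | rfl | rfl
          · exact hcon.2.1 rfl
          · exact hcon.2.2 rfl
          · exact hy0c hxy
          · exact hxy.ne rfl
    · -- v = w
      refine ⟨{s(u, c0), s(w, y0)}, {u, w}, matching2 huc hy0w.symm huwne
        (Ne.symm hy0nu) hcw (Ne.symm hy0nc), ?_, ?_, Or.inl (by simp [hveq])⟩
      · rw [Finset.card_pair (sym2_ne huwne (Ne.symm hy0nu)), Finset.card_pair huwne]
      · apply cover_helper
        intro x y hxy _
        by_contra hcon
        push_neg at hcon
        simp only [Finset.mem_insert, Finset.mem_singleton, not_or] at hcon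
        rcases hall x with rfl | rfl | rfl | rfl
        · exact hcon.1.1 rfl
        · exact hcon.1.2 rfl
        · rcases hall y with rfl | rfl | rfl | rfl
          · exact hcon.2.1 rfl
          · exact hcon.2.2 rfl
          · exact hxy.ne rfl
          · exact hy0c hxy.symm
        · rcases hall y with rfl | rfl | rfl | rfl
          · exact hcon.2.1 rfl
          · exact hcon.2.2 rfl
          · exact hy0c hxy
          · exact hxy.ne rfl
    · -- v = c0
      refine ⟨{s(u, c0), s(w, y0)}, {u, c0}, matching2 huc hy0w.symm huwne
        (Ne.symm hy0nu) hcw (Ne.symm hy0nc), ?_, ?_, Or.inl (by simp [hveq])⟩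
      · rw [Finset.card_pair (sym2_ne huwne (Ne.symm hy0nu)),
          Finset.card_pair huc.ne]
      · apply cover_helper
        intro x y hxy hnm
        by_contra hcon
        push_neg at hcon
        simp only [Finset.mem_insert, Finset.mem_singleton, not_or] at hcon
        rcases hall x with rfl | rfl | rfl | rfl
        · exact hcon.1.1 rfl
        · rcases hall y with rfl | rfl | rfl | rfl
          · exact hcon.2.1 rfl
          · exact hxy.ne rfl
          · exact hcon.2.2 rfl
          · exact hnm (by simp)
        · exact hcon.1.2 rfl
        · rcases hall y with rfl | rfl | rfl | rfl
          · exact hcon.2.1 rfl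
          · exact hnm (by rw [Sym2.eq_swap]; simp)
          · exact hcon.2.2 rfl
          · exact hxy.ne rfl
    · -- v = y0
      refine ⟨{s(u, y0), s(w, c0)}, {u, y0}, matching2 hy0u.symm hwc huwne
        hcu.symm hy0nw hy0nc, ?_, ?_, Or.inl (by simp [hveq])⟩
      · rw [Finset.card_pair (sym2_ne huwne hcu.symm),
          Finset.card_pair hy0u.ne']
      · apply cover_helper
        intro x y hxy hnm
        by_contra hcon
        push_neg at hcon
        simp only [Finset.mem_insert, Finset.mem_singleton, not_or] at hcon
        rcases hall x with rfl | rfl | rfl | rfl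
        · exact hcon.1.1 rfl
        · rcases hall y with rfl | rfl | rfl | rfl
          · exact hcon.2.1 rfl
          · exact hxy.ne rfl
          · exact hnm (by simp)
          · exact hcon.2.2 rfl
        · rcases hall y with rfl | rfl | rfl | rfl
          · exact hcon.2.1 rfl
          · exact hnm (by rw [Sym2.eq_swap]; simp)
          · exact hxy.ne rfl
          · exact hcon.2.2 rfl
        · exact hcon.1.2 rfl


lemma pair_of_adj [DecidableEq V] {H : SimpleGraph V}
    (h2conn : ∀ v : V, (H.induce {u | u ≠ v}).Connected)
    (hodd : ∀ (u : V) (w : H.Walk u u), w.IsCycle → Odd w.length → w.length ≤ 3)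
    {a b c z : V} (hab : H.Adj a b) (hac : H.Adj a c) (hbc : H.Adj b c)
    (hza : z ≠ a) (hzb : z ≠ b) (hzc : z ≠ c)
    (hadj : H.Adj z a ∨ H.Adj z b ∨ H.Adj z c) :
    (H.Adj z a ∧ H.Adj z b) ∨ (H.Adj z a ∧ H.Adj z c) ∨ (H.Adj z b ∧ H.Adj z c) := by
  rcases hadj with h | h | h
  · rcases L1 h2conn hodd hab hac hbc h.symm hzb hzc with h' | h'
    · exact Or.inl ⟨h, h'⟩
    · exact Or.inr (Or.inl ⟨h, h'⟩)
  · rcases L1 h2conn hodd hab.symm hbc hac h.symm hza hzc with h' | h'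
    · exact Or.inl ⟨h', h⟩
    · exact Or.inr (Or.inr ⟨h, h'⟩)
  · rcases L1 h2conn hodd hac.symm hbc.symm hab h.symm hza hzb with h' | h'
    · exact Or.inr (Or.inl ⟨h', h⟩)
    · exact Or.inr (Or.inr ⟨h', h⟩)


end WKEaux

open WKEaux in
/-- If `H` is a finite 2-connected graph with no odd cycle of length greater than 3, then
for every vertex `v` there are a matching `M` and a vertex set `Q` with `|Q| ≤ |M|` such
that `Q` is a vertex cover of `H - M` and either `v ∈ Q` or `v` is in no edge of `M`.
In particular, `H` is a weak König--Egerváry graph. -/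
theorem two_connected_no_long_odd_cycle_wke [Fintype V] [DecidableEq V] (H : SimpleGraph V)
    (hcard : 3 ≤ Fintype.card V)
    (h2conn : ∀ v : V, (H.induce {u | u ≠ v}).Connected)
    (hodd : ∀ (u : V) (w : H.Walk u u), w.IsCycle → Odd w.length → w.length ≤ 3) :
    (∀ v : V, ∃ (M : Finset (Sym2 V)) (Q : Finset V),
      IsMatchingSet H M ∧ Q.card ≤ M.card ∧ IsVertexCoverSet (H.deleteEdges ↑M) Q ∧
        (v ∈ Q ∨ ∀ e ∈ M, v ∉ e)) ∧
      WKE H := by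
  classical
  have hconn : H.Connected := connected_of_h2conn hcard h2conn
  have key : ∀ v : V, ∃ (M : Finset (Sym2 V)) (Q : Finset V),
      IsMatchingSet H M ∧ Q.card ≤ M.card ∧ IsVertexCoverSet (H.deleteEdges ↑M) Q ∧
        (v ∈ Q ∨ ∀ e ∈ M, v ∉ e) := by
    by_cases hbip : ∃ f : V → Bool, ∀ a b, H.Adj a b → f a ≠ f b
    · obtain ⟨f, hf⟩ := hbip
      exact fun v => bipartite_case hf v
    · obtain ⟨a, b, c, hab, hac, hbc⟩ := exists_triangle hconn hodd hbip
      intro v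
      -- every vertex off the triangle is adjacent to it
      have hTnb' : ∀ n : ℕ, ∀ y : V, H.dist y a ≤ n → y ≠ a → y ≠ b → y ≠ c →
          (H.Adj y a ∨ H.Adj y b ∨ H.Adj y c) := by
        intro n
        induction n with
        | zero =>
          intro y hd hya _ _
          exact absurd hd (by
            have : H.dist y a ≠ 0 := SimpleGraph.dist_ne_zero_iff_ne_and_reachable.mpr
              ⟨hya, hconn.preconnected y a⟩
            omega)
        | succ n ih =>
          intro y hd hya hyb hyc
          have hd0 : H.dist y a ≠ 0 := SimpleGraph.dist_ne_zero_iff_ne_and_reachable.mpr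
            ⟨hya, hconn.preconnected y a⟩
          obtain ⟨p, hp⟩ := SimpleGraph.exists_walk_of_dist_ne_zero hd0
          cases p with
          | nil =>
            rw [SimpleGraph.Walk.length_nil] at hp
            omega
          | @cons _ y1 _ h q =>
            rw [SimpleGraph.Walk.length_cons] at hp
            have hq : H.dist y1 a ≤ n := by
              have := SimpleGraph.dist_le q
              omega
            by_cases hy1a : y1 = a
            · subst hy1a; exact Or.inl h
            by_cases hy1b : y1 = b
            · subst hy1b; exact Or.inr (Or.inl h)
            by_cases hy1c : y1 = c
            · subst hy1c; exact Or.inr (Or.inr h)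
            have hp1 := pair_of_adj h2conn hodd hab hac hbc hy1a hy1b hy1c
              (ih y1 hq hy1a hy1b hy1c)
            rcases hp1 with ⟨h1, h2⟩ | ⟨h1, h2⟩ | ⟨h1, h2⟩
            · rcases L1 h2conn hodd h1 h2 hab h.symm hya hyb with h' | h'
              · exact Or.inl h'
              · exact Or.inr (Or.inl h')
            · rcases L1 h2conn hodd h1 h2 hac h.symm hya hyc with h' | h'
              · exact Or.inl h'
              · exact Or.inr (Or.inr h')
            · rcases L1 h2conn hodd h1 h2 hbc h.symm hyb hyc with h' | h'
              · exact Or.inr (Or.inl h')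
              · exact Or.inr (Or.inr h')
      have hpair : ∀ y : V, y ≠ a → y ≠ b → y ≠ c →
          ((H.Adj y a ∧ H.Adj y b) ∨ (H.Adj y a ∧ H.Adj y c) ∨
            (H.Adj y b ∧ H.Adj y c)) := fun y h1 h2 h3 =>
        pair_of_adj h2conn hodd hab hac hbc h1 h2 h3
          (hTnb' (H.dist y a) y le_rfl h1 h2 h3)
      by_cases h4 : ∃ y, y ≠ a ∧ y ≠ b ∧ y ≠ c ∧ H.Adj y a ∧ H.Adj y b ∧ H.Adj y c
      · -- K4 case
        obtain ⟨y, hya, hyb, hyc, hA, hB, hC⟩ := h4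
        have hall : ∀ z : V, z = a ∨ z = b ∨ z = c ∨ z = y := by
          intro z
          by_cases hza : z = a; · exact Or.inl hza
          by_cases hzb : z = b; · exact Or.inr (Or.inl hzb)
          by_cases hzc : z = c; · exact Or.inr (Or.inr (Or.inl hzc))
          by_cases hzy : z = y; · exact Or.inr (Or.inr (Or.inr hzy))
          exfalso
          rcases hpair z hza hzb hzc with ⟨h1, h2⟩ | ⟨h1, h2⟩ | ⟨h1, h2⟩
          · exact no5 hodd h1 hA.symm hC hbc.symm h2.symm hzy hzc hac.ne hab.ne hyb
          · exact no5 hodd h1 hA.symm hB hbc h2.symm hzy hzb hab.ne hac.ne hyc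
          · exact no5 hodd h1 hB.symm hA hac h2.symm hzy hza hab.ne' hbc.ne hyc
        have hM : IsMatchingSet H {s(a, b), s(c, y)} :=
          matching2 hab hC.symm hac.ne (Ne.symm hya) hbc.ne (Ne.symm hyb)
        have hMcard : ({s(a, b), s(c, y)} : Finset (Sym2 V)).card = 2 :=
          Finset.card_pair (sym2_ne hac.ne (Ne.symm hya))
        by_cases hvab : v = a ∨ v = b
        · refine ⟨{s(a, b), s(c, y)}, {a, b}, hM, ?_, ?_, Or.inl (by
            rcases hvab with rfl | rfl <;> simp)⟩
          · rw [hMcard, Finset.card_pair hab.ne]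
          · apply cover_helper
            intro x z hxz hnm
            by_contra hcon
            push_neg at hcon
            simp only [Finset.mem_insert, Finset.mem_singleton, not_or] at hcon
            rcases hall x with rfl | rfl | rfl | rfl
            · exact hcon.1.1 rfl
            · exact hcon.1.2 rfl
            · rcases hall z with rfl | rfl | rfl | rfl
              · exact hcon.2.1 rfl
              · exact hcon.2.2 rfl
              · exact hxz.ne rfl
              · exact hnm (by simp)
            · rcases hall z with rfl | rfl | rfl | rfl
              · exact hcon.2.1 rfl
              · exact hcon.2.2 rfl
              · exact hnm (by rw [Sym2.eq_swap]; simp)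
              · exact hxz.ne rfl
        · refine ⟨{s(a, b), s(c, y)}, {c, y}, hM, ?_, ?_, Or.inl (by
            rcases hall v with rfl | rfl | rfl | rfl
            · exact absurd (Or.inl rfl) hvab
            · exact absurd (Or.inr rfl) hvab
            · simp
            · simp)⟩
          · rw [hMcard, Finset.card_pair (fun h => hyc h.symm)]
          · apply cover_helper
            intro x z hxz hnm
            by_contra hcon
            push_neg at hcon
            simp only [Finset.mem_insert, Finset.mem_singleton, not_or] at hcon
            rcases hall x with rfl | rfl | rfl | rfl
            · rcases hall z with rfl | rfl | rfl | rfl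
              · exact hxz.ne rfl
              · exact hnm (by simp)
              · exact hcon.2.1 rfl
              · exact hcon.2.2 rfl
            · rcases hall z with rfl | rfl | rfl | rfl
              · exact hnm (by rw [Sym2.eq_swap]; simp)
              · exact hxz.ne rfl
              · exact hcon.2.1 rfl
              · exact hcon.2.2 rfl
            · exact hcon.1.1 rfl
            · exact hcon.1.2 rfl
      · -- no K4
        by_cases h3 : ∀ z : V, z = a ∨ z = b ∨ z = c
        · -- triangle only
          rcases h3 v with hv | hv | hv
          · refine ⟨{s(b, c)}, {a}, matching1 hbc, by simp, ?_, Or.inl (by simp [hv])⟩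
            apply cover_helper
            intro x z hxz hnm
            by_contra hcon
            push_neg at hcon
            simp only [Finset.mem_singleton, not_or] at hcon
            rcases h3 x with rfl | rfl | rfl
            · exact hcon.1 rfl
            · rcases h3 z with rfl | rfl | rfl
              · exact hcon.2 rfl
              · exact hxz.ne rfl
              · exact hnm (by simp)
            · rcases h3 z with rfl | rfl | rfl
              · exact hcon.2 rfl
              · exact hnm (by rw [Sym2.eq_swap]; simp)
              · exact hxz.ne rfl
          · refine ⟨{s(a, c)}, {b}, matching1 hac, by simp, ?_, Or.inl (by simp [hv])⟩
            apply cover_helper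
            intro x z hxz hnm
            by_contra hcon
            push_neg at hcon
            simp only [Finset.mem_singleton, not_or] at hcon
            rcases h3 x with rfl | rfl | rfl
            · rcases h3 z with rfl | rfl | rfl
              · exact hxz.ne rfl
              · exact hcon.2 rfl
              · exact hnm (by simp)
            · exact hcon.1 rfl
            · rcases h3 z with rfl | rfl | rfl
              · exact hnm (by rw [Sym2.eq_swap]; simp)
              · exact hcon.2 rfl
              · exact hxz.ne rfl
          · refine ⟨{s(a, b)}, {c}, matching1 hab, by simp, ?_, Or.inl (by simp [hv])⟩
            apply cover_helper
            intro x z hxz hnm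
            by_contra hcon
            push_neg at hcon
            simp only [Finset.mem_singleton, not_or] at hcon
            rcases h3 x with rfl | rfl | rfl
            · rcases h3 z with rfl | rfl | rfl
              · exact hxz.ne rfl
              · exact hnm (by simp)
              · exact hcon.2 rfl
            · rcases h3 z with rfl | rfl | rfl
              · exact hnm (by rw [Sym2.eq_swap]; simp)
              · exact hxz.ne rfl
              · exact hcon.2 rfl
            · exact hcon.1 rfl
        · push_neg at h3
          obtain ⟨y0, hy0a, hy0b, hy0c⟩ := h3
          have hnoK4 : ∀ y, y ≠ a → y ≠ b → y ≠ c →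
              ¬(H.Adj y a ∧ H.Adj y b ∧ H.Adj y c) := by
            intro y h1 h2 h3' hcon
            exact h4 ⟨y, h1, h2, h3', hcon.1, hcon.2.1, hcon.2.2⟩
          rcases hpair y0 hy0a hy0b hy0c with ⟨h1, h2⟩ | ⟨h1, h2⟩ | ⟨h1, h2⟩
          · exact book_case hodd hab hac hbc h1 h2 hy0a hy0b hy0c
              (fun y hy1 hy2 hy3 => hpair y hy1 hy2 hy3)
              (fun y hy1 hy2 hy3 => hnoK4 y hy1 hy2 hy3) v
          · exact book_case hodd hac hab hbc.symm h1 h2 hy0a hy0c hy0b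
              (fun y hy1 hy3 hy2 => by rcases hpair y hy1 hy2 hy3 with hP | hP | hP <;> tauto)
              (fun y hy1 hy3 hy2 hcon => hnoK4 y hy1 hy2 hy3 ⟨hcon.1, hcon.2.2, hcon.2.1⟩) v
          · exact book_case hodd hbc hab.symm hac.symm h1 h2 hy0b hy0c hy0a
              (fun y hy2 hy3 hy1 => by rcases hpair y hy1 hy2 hy3 with hP | hP | hP <;> tauto)
              (fun y hy2 hy3 hy1 hcon => hnoK4 y hy1 hy2 hy3 ⟨hcon.2.2, hcon.1, hcon.2.1⟩) v
  refine ⟨key, ?_⟩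
  have hne : Nonempty V := Fintype.card_pos_iff.mp (by omega)
  obtain ⟨v⟩ := hne
  obtain ⟨M, Q, h1, h2, h3, -⟩ := key v
  exact ⟨M, Q, h1, h2, h3⟩
end

section
/- Let H be a finite connected simple graph on n vertices with n ≥ 6. If H has an independent set of size n − 3, then H is a weak König–Egerváry graph. -/
open SimpleGraph

variable {V : Type*}

section aux
variable [DecidableEq V] {H : SimpleGraph V}

lemma sym2_disj {p1 p2 p3 p4 : V} (h13 : p1 ≠ p3) (h14 : p1 ≠ p4)
    (h23 : p2 ≠ p3) (h24 : p2 ≠ p4) : ∀ x, x ∈ s(p1,p2) → x ∉ s(p3,p4) := by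
  intro x hx hx'
  simp only [Sym2.mem_iff] at hx hx'
  rcases hx with rfl | rfl <;> rcases hx' with h | h <;> simp_all

lemma wke_one {x1 y1 q1 : V} (h1 : H.Adj x1 y1)
    (hcov : ∀ u w : V, H.Adj u w → s(u,w) ≠ s(x1,y1) → u = q1 ∨ w = q1) : WKE H := by
  refine ⟨{s(x1,y1)}, {q1}, ⟨?_, ?_⟩, ?_, ?_⟩
  · intro e he
    simp only [Finset.coe_singleton, Set.mem_singleton_iff] at he
    simpa [he] using h1
  · simp
  · simp
  · intro e he
    induction e with
    | _ u w =>
      rw [SimpleGraph.mem_edgeSet, SimpleGraph.deleteEdges_adj] at he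
      obtain ⟨hadj, hne⟩ := he
      simp only [Finset.coe_singleton, Set.mem_singleton_iff] at hne
      rcases hcov u w hadj hne with h | h
      · exact ⟨u, by simp, by simp [h]⟩
      · exact ⟨w, by simp, by simp [h]⟩

lemma wke_two {x1 y1 x2 y2 q1 q2 : V} (h1 : H.Adj x1 y1) (h2 : H.Adj x2 y2)
    (hd : ∀ x, x ∈ s(x1,y1) → x ∉ s(x2,y2))
    (hcov : ∀ u w : V, H.Adj u w → s(u,w) ≠ s(x1,y1) → s(u,w) ≠ s(x2,y2) →
      u = q1 ∨ u = q2 ∨ w = q1 ∨ w = q2) : WKE H := by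
  have hne : s(x1,y1) ≠ s(x2,y2) := by
    intro h
    exact hd x1 (by simp) (h ▸ (by simp : x1 ∈ s(x1,y1)))
  refine ⟨{s(x1,y1), s(x2,y2)}, {q1, q2}, ⟨?_, ?_⟩, ?_, ?_⟩
  · intro e he
    simp only [Finset.coe_insert, Finset.coe_singleton, Set.mem_insert_iff,
      Set.mem_singleton_iff] at he
    rcases he with rfl | rfl <;> simpa using ‹_›
  · intro e he f hf hef
    simp only [Finset.coe_insert, Finset.coe_singleton, Set.mem_insert_iff,
      Set.mem_singleton_iff] at he hf
    rcases he with rfl | rfl <;> rcases hf with rfl | rfl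
    · exact absurd rfl hef
    · exact hd
    · exact fun x hx hx' => hd x hx' hx
    · exact absurd rfl hef
  · have c1 : ({s(x1,y1), s(x2,y2)} : Finset (Sym2 V)).card = 2 := by
      rw [Finset.card_insert_of_notMem (by simpa using hne), Finset.card_singleton]
    have c2 : ({q1, q2} : Finset V).card ≤ 2 :=
      (Finset.card_insert_le _ _).trans (by simp)
    omega
  · intro e he
    induction e with
    | _ u w =>
      rw [SimpleGraph.mem_edgeSet, SimpleGraph.deleteEdges_adj] at he
      obtain ⟨hadj, hne'⟩ := he
      simp only [Finset.coe_insert, Finset.coe_singleton, Set.mem_insert_iff,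
        Set.mem_singleton_iff, not_or] at hne'
      rcases hcov u w hadj hne'.1 hne'.2 with h | h | h | h
      · exact ⟨u, by simp, by simp [h]⟩
      · exact ⟨u, by simp, by simp [h]⟩
      · exact ⟨w, by simp, by simp [h]⟩
      · exact ⟨w, by simp, by simp [h]⟩

lemma wke_three {x1 y1 x2 y2 x3 y3 q1 q2 q3 : V} (h1 : H.Adj x1 y1) (h2 : H.Adj x2 y2)
    (h3 : H.Adj x3 y3)
    (hd12 : ∀ x, x ∈ s(x1,y1) → x ∉ s(x2,y2))
    (hd13 : ∀ x, x ∈ s(x1,y1) → x ∉ s(x3,y3))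
    (hd23 : ∀ x, x ∈ s(x2,y2) → x ∉ s(x3,y3))
    (hcov : ∀ u w : V, H.Adj u w → u = q1 ∨ u = q2 ∨ u = q3 ∨ w = q1 ∨ w = q2 ∨ w = q3) :
    WKE H := by
  have hne12 : s(x1,y1) ≠ s(x2,y2) := fun h => hd12 x1 (by simp) (h ▸ (by simp : x1 ∈ s(x1,y1)))
  have hne13 : s(x1,y1) ≠ s(x3,y3) := fun h => hd13 x1 (by simp) (h ▸ (by simp : x1 ∈ s(x1,y1)))
  have hne23 : s(x2,y2) ≠ s(x3,y3) := fun h => hd23 x2 (by simp) (h ▸ (by simp : x2 ∈ s(x2,y2)))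
  refine ⟨{s(x1,y1), s(x2,y2), s(x3,y3)}, {q1, q2, q3}, ⟨?_, ?_⟩, ?_, ?_⟩
  · intro e he
    simp only [Finset.coe_insert, Finset.coe_singleton, Set.mem_insert_iff,
      Set.mem_singleton_iff] at he
    rcases he with rfl | rfl | rfl <;> simpa using ‹_›
  · intro e he f hf hef
    simp only [Finset.coe_insert, Finset.coe_singleton, Set.mem_insert_iff,
      Set.mem_singleton_iff] at he hf
    rcases he with rfl | rfl | rfl <;> rcases hf with rfl | rfl | rfl
    · exact absurd rfl hef
    · exact hd12
    · exact hd13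
    · exact fun x hx hx' => hd12 x hx' hx
    · exact absurd rfl hef
    · exact hd23
    · exact fun x hx hx' => hd13 x hx' hx
    · exact fun x hx hx' => hd23 x hx' hx
    · exact absurd rfl hef
  · have c1 : ({s(x1,y1), s(x2,y2), s(x3,y3)} : Finset (Sym2 V)).card = 3 := by
      rw [Finset.card_insert_of_notMem (by simp [hne12, hne13]),
        Finset.card_insert_of_notMem (by simpa using hne23), Finset.card_singleton]
    have c2 : ({q1, q2, q3} : Finset V).card ≤ 3 :=
      (Finset.card_insert_le _ _).trans (by
        simpa using Nat.add_le_add_right ((Finset.card_insert_le q2 {q3}).trans (by simp : ({q3} : Finset V).card + 1 ≤ 2)) 1)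
    omega
  · intro e he
    induction e with
    | _ u w =>
      rw [SimpleGraph.mem_edgeSet, SimpleGraph.deleteEdges_adj] at he
      rcases hcov u w he.1 with h | h | h | h | h | h
      · exact ⟨u, by simp, by simp [h]⟩
      · exact ⟨u, by simp, by simp [h]⟩
      · exact ⟨u, by simp, by simp [h]⟩
      · exact ⟨w, by simp, by simp [h]⟩
      · exact ⟨w, by simp, by simp [h]⟩
      · exact ⟨w, by simp, by simp [h]⟩

end aux

set_option maxHeartbeats 1600000 in
/-- A finite connected graph on `n ≥ 6` vertices with an independent set of size `n - 3`
is a weak König--Egerváry graph. -/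
theorem big_independent_set_wke [Fintype V] [DecidableEq V] (H : SimpleGraph V)
    (hconn : H.Connected) (hn : 6 ≤ Fintype.card V)
    (I : Finset V) (hind : ∀ u ∈ I, ∀ w ∈ I, ¬ H.Adj u w)
    (hcard : I.card = Fintype.card V - 3) :
    WKE H := by
  classical
  have hIle : I.card ≤ Fintype.card V := Finset.card_le_univ I
  have hI3 : 3 ≤ I.card := by omega
  have hI1 : 1 < I.card := by omega
  have hTcard : Iᶜ.card = 3 := by
    rw [Finset.card_compl]; omega
  obtain ⟨a, b, c, hab, hac, hbc, hTeq⟩ := Finset.card_eq_three.mp hTcard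
  have hmemT : ∀ u, u ∉ I → (u = a ∨ u = b ∨ u = c) := by
    intro u hu
    have h : u ∈ Iᶜ := Finset.mem_compl.mpr hu
    rw [hTeq] at h
    simpa using h
  have haI : a ∉ I := by
    have : a ∈ Iᶜ := by rw [hTeq]; simp
    simpa using this
  have hbI : b ∉ I := by
    have : b ∈ Iᶜ := by rw [hTeq]; simp
    simpa using this
  have hcI : c ∉ I := by
    have : c ∈ Iᶜ := by rw [hTeq]; simp
    simpa using this
  -- every vertex of I has a neighbor, necessarily outside I
  have hIadj : ∀ w ∈ I, ∃ t, t ∉ I ∧ H.Adj w t := by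
    intro w hw
    have hwa : w ≠ a := fun h => haI (h ▸ hw)
    obtain ⟨p⟩ := hconn w a
    cases p with
    | nil => exact absurd rfl hwa
    | cons h _ =>
      rename_i y _
      exact ⟨y, fun hy => hind w hw y hy h, h⟩
  -- Local lemma L2 : two distinct matched neighbors for x, y and z has no I-neighbors
  have L2 : ∀ x y z : V, (∀ u, u ∉ I → u = x ∨ u = y ∨ u = z) → x ∉ I → y ∉ I →
      x ≠ y → (∀ w ∈ I, ¬H.Adj z w) →
      ∀ vx ∈ I, ∀ vy ∈ I, vx ≠ vy → H.Adj x vx → H.Adj y vy → WKE H := by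
    intro x y z hT' hxI hyI hxy hPz vx hvx vy hvy hvne hax hby
    apply wke_two hax hby (q1 := x) (q2 := y)
    · exact sym2_disj hxy (fun h => hxI (h ▸ hvy)) (fun h => hyI (h ▸ hvx)) hvne
    · intro u w hadj _ _
      by_cases hu : u ∈ I
      · have hw : w ∉ I := fun hw => hind u hu w hw hadj
        rcases hT' w hw with rfl | rfl | rfl
        · tauto
        · tauto
        · exact absurd hadj.symm (hPz u hu)
      · rcases hT' u hu with rfl | rfl | rfl
        · tauto
        · tauto
        · by_cases hw : w ∈ I
          · exact absurd hadj (hPz w hw)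
          · rcases hT' w hw with rfl | rfl | rfl
            · tauto
            · tauto
            · exact absurd hadj (H.irrefl)
  -- Local lemma L1 : x and z have no I-neighbors
  have L1 : ∀ x y z : V, (∀ u, u ∉ I → u = x ∨ u = y ∨ u = z) →
      x ∉ I → y ∉ I → z ∉ I → x ≠ y → x ≠ z → y ≠ z →
      (∀ w ∈ I, ¬H.Adj x w) → (∀ w ∈ I, ¬H.Adj z w) →
      ∀ vy ∈ I, H.Adj y vy → WKE H := by
    intro x y z hT' hxI hyI hzI hxy hxz hyz hPx hPz vy hvy hby
    by_cases hadjxz : H.Adj x z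
    · apply wke_two hadjxz hby (q1 := x) (q2 := y)
      · exact sym2_disj hxy (fun h => hxI (h ▸ hvy)) (Ne.symm hyz) (fun h => hzI (h ▸ hvy))
      · intro u w hadj _ _
        by_cases hu : u ∈ I
        · have hw : w ∉ I := fun hw => hind u hu w hw hadj
          rcases hT' w hw with rfl | rfl | rfl
          · tauto
          · tauto
          · exact absurd hadj.symm (hPz u hu)
        · rcases hT' u hu with rfl | rfl | rfl
          · tauto
          · tauto
          · by_cases hw : w ∈ I
            · exact absurd hadj (hPz w hw)
            · rcases hT' w hw with rfl | rfl | rfl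
              · tauto
              · tauto
              · exact absurd hadj (H.irrefl)
    · apply wke_one hby (q1 := y)
      intro u w hadj _
      by_cases hu : u ∈ I
      · have hw : w ∉ I := fun hw => hind u hu w hw hadj
        rcases hT' w hw with rfl | rfl | rfl
        · exact absurd hadj.symm (hPx u hu)
        · tauto
        · exact absurd hadj.symm (hPz u hu)
      · by_cases hw : w ∈ I
        · rcases hT' u hu with rfl | rfl | rfl
          · exact absurd hadj (hPx w hw)
          · tauto
          · exact absurd hadj (hPz w hw)
        · rcases hT' u hu with rfl | rfl | rfl <;> rcases hT' w hw with rfl | rfl | rfl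
          · exact absurd hadj (H.irrefl)
          · tauto
          · exact absurd hadj hadjxz
          · tauto
          · tauto
          · tauto
          · exact absurd hadj.symm hadjxz
          · tauto
          · exact absurd hadj (H.irrefl)
  -- Local lemma L3 : x and y have the same unique I-neighbor v
  have L3 : ∀ x y z : V, (∀ u, u ∉ I → u = x ∨ u = y ∨ u = z) →
      x ∉ I → y ∉ I → z ∉ I → x ≠ y → x ≠ z → y ≠ z →
      ∀ v ∈ I, H.Adj x v → H.Adj y v →
      (∀ w ∈ I, H.Adj x w → w = v) → (∀ w ∈ I, H.Adj y w → w = v) → WKE H := by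
    intro x y z hT' hxI hyI hzI hxy hxz hyz v hvI hxv hyv hx1 hy1
    obtain ⟨w1, hw1I, hw1v⟩ := Finset.exists_mem_ne hI1 v
    obtain ⟨t, htI, hadjw1⟩ := hIadj w1 hw1I
    rcases hT' t htI with h | h | h
    · rw [h] at hadjw1
      exact absurd (hx1 w1 hw1I hadjw1.symm) hw1v
    · rw [h] at hadjw1
      exact absurd (hy1 w1 hw1I hadjw1.symm) hw1v
    · rw [h] at hadjw1
      -- t = z
      by_cases hxy' : H.Adj x y
      · apply wke_two hxy' hadjw1.symm (q1 := z) (q2 := v)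
        · exact sym2_disj hxz (fun h => hxI (h ▸ hw1I)) hyz (fun h => hyI (h ▸ hw1I))
        · intro u w hadj hne1 _
          by_cases hu : u ∈ I
          · have hw : w ∉ I := fun hw => hind u hu w hw hadj
            rcases hT' w hw with rfl | rfl | rfl
            · exact Or.inr (Or.inl (hx1 u hu hadj.symm))
            · exact Or.inr (Or.inl (hy1 u hu hadj.symm))
            · tauto
          · rcases hT' u hu with rfl | rfl | rfl
            · by_cases hw : w ∈ I
              · exact Or.inr (Or.inr (Or.inr (hx1 w hw hadj)))
              · rcases hT' w hw with rfl | rfl | rfl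
                · exact absurd hadj (H.irrefl)
                · exact absurd rfl hne1
                · tauto
            · by_cases hw : w ∈ I
              · exact Or.inr (Or.inr (Or.inr (hy1 w hw hadj)))
              · rcases hT' w hw with rfl | rfl | rfl
                · exact absurd (Sym2.eq_swap) hne1
                · exact absurd hadj (H.irrefl)
                · tauto
            · tauto
      · apply wke_two hxv hadjw1.symm (q1 := z) (q2 := v)
        · exact sym2_disj hxz (fun h => hxI (h ▸ hw1I)) (fun h => hzI (h ▸ hvI)) (Ne.symm hw1v)
        · intro u w hadj _ _
          by_cases hu : u ∈ I
          · have hw : w ∉ I := fun hw => hind u hu w hw hadj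
            rcases hT' w hw with rfl | rfl | rfl
            · exact Or.inr (Or.inl (hx1 u hu hadj.symm))
            · exact Or.inr (Or.inl (hy1 u hu hadj.symm))
            · tauto
          · rcases hT' u hu with rfl | rfl | rfl
            · by_cases hw : w ∈ I
              · exact Or.inr (Or.inr (Or.inr (hx1 w hw hadj)))
              · rcases hT' w hw with rfl | rfl | rfl
                · exact absurd hadj (H.irrefl)
                · exact absurd hadj hxy'
                · tauto
            · by_cases hw : w ∈ I
              · exact Or.inr (Or.inr (Or.inr (hy1 w hw hadj)))
              · rcases hT' w hw with rfl | rfl | rfl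
                · exact absurd hadj.symm hxy'
                · exact absurd hadj (H.irrefl)
                · tauto
            · tauto
  -- Local lemma L2' : x and y both have I-neighbors, z has none
  have L2' : ∀ x y z : V, (∀ u, u ∉ I → u = x ∨ u = y ∨ u = z) →
      x ∉ I → y ∉ I → z ∉ I → x ≠ y → x ≠ z → y ≠ z →
      (∀ w ∈ I, ¬H.Adj z w) →
      ∀ vx ∈ I, H.Adj x vx → ∀ vy ∈ I, H.Adj y vy → WKE H := by
    intro x y z hT' hxI hyI hzI hxy hxz hyz hPz vx hvx hax vy hvy hby
    by_cases hvne : vx = vy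
    · subst hvne
      obtain ⟨w1, hw1I, hw1v⟩ := Finset.exists_mem_ne hI1 vx
      obtain ⟨t, htI, hadjw1⟩ := hIadj w1 hw1I
      rcases hT' t htI with h | h | h
      · rw [h] at hadjw1
        exact L2 x y z hT' hxI hyI hxy hPz w1 hw1I vx hvy hw1v hadjw1.symm hby
      · rw [h] at hadjw1
        exact L2 x y z hT' hxI hyI hxy hPz vx hvx w1 hw1I (Ne.symm hw1v) hax hadjw1.symm
      · rw [h] at hadjw1
        exact absurd hadjw1.symm (hPz w1 hw1I)
    · exact L2 x y z hT' hxI hyI hxy hPz vx hvx vy hvy hvne hax hby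
  -- main case analysis
  by_cases hPa : ∃ v ∈ I, H.Adj a v
  · by_cases hPb : ∃ v ∈ I, H.Adj b v
    · by_cases hPc : ∃ v ∈ I, H.Adj c v
      · -- all three have I-neighbors : Hall
        set d : Fin 3 → Finset V :=
          ![I.filter (fun v => H.Adj a v), I.filter (fun v => H.Adj b v),
            I.filter (fun v => H.Adj c v)] with hd
        by_cases hHall : ∀ s : Finset (Fin 3), s.card ≤ (s.biUnion d).card
        · obtain ⟨f, hinj, hf⟩ := (Finset.all_card_le_biUnion_card_iff_exists_injective d).mp hHall
          have h0 := hf 0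
          have h1 := hf 1
          have h2 := hf 2
          simp only [hd, Matrix.cons_val_zero, Matrix.cons_val_one, Matrix.head_cons,
            Matrix.cons_val_two, Matrix.tail_cons, Finset.mem_filter] at h0 h1 h2
          have hf01 : f 0 ≠ f 1 := fun h => absurd (hinj h) (by decide)
          have hf02 : f 0 ≠ f 2 := fun h => absurd (hinj h) (by decide)
          have hf12 : f 1 ≠ f 2 := fun h => absurd (hinj h) (by decide)
          apply wke_three h0.2 h1.2 h2.2 (q1 := a) (q2 := b) (q3 := c)
          · exact sym2_disj hab (fun h => haI (h ▸ h1.1)) (fun h => hbI (h ▸ h0.1)) hf01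
          · exact sym2_disj hac (fun h => haI (h ▸ h2.1)) (fun h => hcI (h ▸ h0.1)) hf02
          · exact sym2_disj hbc (fun h => hbI (h ▸ h2.1)) (fun h => hcI (h ▸ h1.1)) hf12
          · intro u w hadj
            by_cases hu : u ∈ I
            · have hw : w ∉ I := fun hw => hind u hu w hw hadj
              rcases hmemT w hw with rfl | rfl | rfl <;> tauto
            · rcases hmemT u hu with rfl | rfl | rfl <;> tauto
        · push_neg at hHall
          obtain ⟨s, hs⟩ := hHall
          have hne : ∀ i : Fin 3, (d i).Nonempty := by
            intro i
            fin_cases i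
            · obtain ⟨v, hv, hav⟩ := hPa
              exact ⟨v, by simp [hd, Finset.mem_filter, hv, hav]⟩
            · obtain ⟨v, hv, hbv⟩ := hPb
              exact ⟨v, by simp [hd, Finset.mem_filter, hv, hbv]⟩
            · obtain ⟨v, hv, hcv⟩ := hPc
              exact ⟨v, by simp [hd, Finset.mem_filter, hv, hcv]⟩
          have hs3 : s.card ≤ 3 := (Finset.card_le_univ s).trans (by simp)
          have hs2 : s.card = 2 := by
            rcases Nat.lt_or_ge s.card 2 with h | h
            · exfalso
              interval_cases h' : s.card
              · omega
              · obtain ⟨i, rfl⟩ := Finset.card_eq_one.mp h'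
                rw [Finset.singleton_biUnion] at hs
                have := (hne i).card_pos
                omega
            · rcases Nat.lt_or_ge s.card 3 with h3 | h3
              · omega
              · exfalso
                have hsu : s = Finset.univ := Finset.eq_univ_of_card s (by simp; omega)
                have hsub : I ⊆ s.biUnion d := by
                  intro v hv
                  obtain ⟨t, htI, hadj⟩ := hIadj v hv
                  rw [hsu]
                  rcases hmemT t htI with rfl | rfl | rfl
                  · exact Finset.mem_biUnion.mpr ⟨0, Finset.mem_univ _,
                      by simp [hd, Finset.mem_filter, hv, hadj.symm]⟩
                  · exact Finset.mem_biUnion.mpr ⟨1, Finset.mem_univ _,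
                      by simp [hd, Finset.mem_filter, hv, hadj.symm]⟩
                  · exact Finset.mem_biUnion.mpr ⟨2, Finset.mem_univ _,
                      by simp [hd, Finset.mem_filter, hv, hadj.symm]⟩
                have := Finset.card_le_card hsub
                omega
          obtain ⟨i, j, hij, rfl⟩ := Finset.card_eq_two.mp hs2
          rw [Finset.biUnion_insert, Finset.singleton_biUnion] at hs
          have hcard1 : (d i ∪ d j).card ≤ 1 := by omega
          have h1i : (d i).card = 1 :=
            le_antisymm ((Finset.card_le_card Finset.subset_union_left).trans hcard1)
              (hne i).card_pos
          obtain ⟨v, hv⟩ := Finset.card_eq_one.mp h1i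
          have huv : d i ∪ d j = {v} := by
            apply (Finset.eq_of_subset_of_card_le (by rw [← hv]; exact Finset.subset_union_left)
              (by rw [hv] at hcard1 ⊢; simpa using hcard1)).symm
          have hjv : d j = {v} := by
            have hsub : d j ⊆ {v} := huv ▸ Finset.subset_union_right
            exact Finset.eq_of_subset_of_card_le (Finset.singleton_subset_iff.mpr
              (by
                obtain ⟨w, hw⟩ := hne j
                have := hsub hw
                simp only [Finset.mem_singleton] at this
                rwa [← this])) (by
                  have := Finset.card_le_one.mpr fun x hx y hy => by
                    have hx' := hsub hx; have hy' := hsub hy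
                    simp only [Finset.mem_singleton] at hx' hy'; rw [hx', hy']
                  simpa using this) |>.symm
          -- now case on which pair (i, j) is
          have key : ∀ x y z : V, x ∉ I → y ∉ I → z ∉ I → x ≠ y → x ≠ z → y ≠ z →
              (∀ u, u ∉ I → u = x ∨ u = y ∨ u = z) →
              I.filter (fun v' => H.Adj x v') = {v} → I.filter (fun v' => H.Adj y v') = {v} →
              WKE H := by
            intro x y z hxI hyI hzI hxy hxz hyz hT' hfx hfy
            have hvI : v ∈ I ∧ H.Adj x v := by
              have : v ∈ I.filter (fun v' => H.Adj x v') := hfx ▸ Finset.mem_singleton_self v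
              simpa using this
            have hyv : v ∈ I ∧ H.Adj y v := by
              have : v ∈ I.filter (fun v' => H.Adj y v') := hfy ▸ Finset.mem_singleton_self v
              simpa using this
            exact L3 x y z hT' hxI hyI hzI hxy hxz hyz v hvI.1 hvI.2 hyv.2
              (fun w hw hadj => by
                have : w ∈ I.filter (fun v' => H.Adj x v') := by simp [hw, hadj]
                rw [hfx] at this; simpa using this)
              (fun w hw hadj => by
                have : w ∈ I.filter (fun v' => H.Adj y v') := by simp [hw, hadj]
                rw [hfy] at this; simpa using this)
          fin_cases i <;> fin_cases j <;>
            simp only [hd, Matrix.cons_val_zero, Matrix.cons_val_one, Matrix.head_cons,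
              Matrix.cons_val_two, Matrix.tail_cons] at hv hjv <;>
            first
            | (exact absurd rfl hij)
            | (exact key a b c haI hbI hcI hab hac hbc hmemT hv hjv)
            | (exact key a b c haI hbI hcI hab hac hbc hmemT hjv hv)
            | (exact key a c b haI hcI hbI hac hab (Ne.symm hbc)
                (fun u hu => by rcases hmemT u hu with h | h | h <;> tauto) hv hjv)
            | (exact key a c b haI hcI hbI hac hab (Ne.symm hbc)
                (fun u hu => by rcases hmemT u hu with h | h | h <;> tauto) hjv hv)
            | (exact key b c a hbI hcI haI hbc (Ne.symm hab) (Ne.symm hac)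
                (fun u hu => by rcases hmemT u hu with h | h | h <;> tauto) hv hjv)
            | (exact key b c a hbI hcI haI hbc (Ne.symm hab) (Ne.symm hac)
                (fun u hu => by rcases hmemT u hu with h | h | h <;> tauto) hjv hv)
      · -- c has no I-neighbor
        push_neg at hPc
        obtain ⟨va, hvaI, hava⟩ := hPa
        obtain ⟨vb, hvbI, hbvb⟩ := hPb
        exact L2' a b c hmemT haI hbI hcI hab hac hbc (fun w hw hadj => hPc w hw hadj)
          va hvaI hava vb hvbI hbvb
    · by_cases hPc : ∃ v ∈ I, H.Adj c v
      · -- b has no I-neighbor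
        push_neg at hPb
        obtain ⟨va, hvaI, hava⟩ := hPa
        obtain ⟨vc, hvcI, hcvc⟩ := hPc
        exact L2' a c b (fun u hu => by rcases hmemT u hu with h | h | h <;> tauto)
          haI hcI hbI hac hab (Ne.symm hbc) (fun w hw hadj => hPb w hw hadj)
          va hvaI hava vc hvcI hcvc
      · -- b, c have no I-neighbors
        push_neg at hPb; push_neg at hPc
        obtain ⟨va, hvaI, hava⟩ := hPa
        exact L1 b a c (fun u hu => by rcases hmemT u hu with h | h | h <;> tauto)
          hbI haI hcI (Ne.symm hab) hbc hac (fun w hw => hPb w hw) (fun w hw => hPc w hw)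
          va hvaI hava
  · by_cases hPb : ∃ v ∈ I, H.Adj b v
    · by_cases hPc : ∃ v ∈ I, H.Adj c v
      · -- a has no I-neighbor
        push_neg at hPa
        obtain ⟨vb, hvbI, hbvb⟩ := hPb
        obtain ⟨vc, hvcI, hcvc⟩ := hPc
        exact L2' b c a (fun u hu => by rcases hmemT u hu with h | h | h <;> tauto)
          hbI hcI haI hbc (Ne.symm hab) (Ne.symm hac) (fun w hw hadj => hPa w hw hadj)
          vb hvbI hbvb vc hvcI hcvc
      · -- a, c have no I-neighbors
        push_neg at hPa; push_neg at hPc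
        obtain ⟨vb, hvbI, hbvb⟩ := hPb
        exact L1 a b c hmemT haI hbI hcI hab hac hbc (fun w hw => hPa w hw)
          (fun w hw => hPc w hw) vb hvbI hbvb
    · by_cases hPc : ∃ v ∈ I, H.Adj c v
      · -- a, b have no I-neighbors
        push_neg at hPa; push_neg at hPb
        obtain ⟨vc, hvcI, hcvc⟩ := hPc
        exact L1 a c b (fun u hu => by rcases hmemT u hu with h | h | h <;> tauto)
          haI hcI hbI hac hab (Ne.symm hbc) (fun w hw => hPa w hw) (fun w hw => hPb w hw)
          vc hvcI hcvc
      · -- none has an I-neighbor : contradiction with connectivity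
        exfalso
        push_neg at hPa hPb hPc
        have : (0 : ℕ) < I.card := by omega
        obtain ⟨w, hw⟩ := Finset.card_pos.mp this
        obtain ⟨t, htI, hadj⟩ := hIadj w hw
        rcases hmemT t htI with rfl | rfl | rfl
        · exact hPa w hw hadj.symm
        · exact hPb w hw hadj.symm
        · exact hPc w hw hadj.symm
end
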